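/- arXiv:math/0207008 — 8 statements merged into one kernel-verified Lean document; each statement's English description precedes it below -/
import Mathlib

section
/- Let 𝔥 be the space of diagonal traceless n×n complex matrices and V = ℂⁿ the vector representation with standard basis v₁,…,vₙ, where vₐ has weight ωₐ. Define R(λ) ∈ End(V⊗V) for λ = (λ₁,…,λₙ) by R = Σₐ E_{aa}⊗E_{aa} + Σ_{a≠b} α_{ab}(λ) E_{aa}⊗E_{bb} + Σ_{a≠b} β_{ab}(λ) E_{ab}⊗E_{ba}, with β_{ab}(λ) = 1/(λ_b − λ_a) and α_{ab}(λ) = 1 + β_{ab}(λ). Then R satisfies the quantum dynamical Yang–Baxter equation with step 1: R¹²(λ − h³) R¹³(λ) R²³(λ − h¹) = R²³(λ) R¹³(λ − h²) R¹²(λ), where the dynamical shift h^i acts by replacing λ with λ − ω_c when the i-th tensor factor carries the basis vector v_c. -/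
set_option maxRecDepth 8000
set_option maxHeartbeats 2000000


/-!
STATEMENT 0: the basic rational solution of the quantum dynamical Yang–Baxter
equation (step 1) on V ⊗ V, V = ℂⁿ the vector representation of 𝔰𝔩ₙ.

Operators on V ⊗ V (resp. V ⊗ V ⊗ V) are encoded as matrices indexed by pairs
(resp. triples) of basis indices; the basis vector `v a` has weight `ω a`
(the a-th coordinate functional), so the dynamical shift `λ - h^i` subtracts
the indicator of the index carried by the i-th tensor leg.
-/

namespace Stmt0

abbrev Mat2 (n : ℕ) := Matrix (Fin n × Fin n) (Fin n × Fin n) ℂ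
abbrev Mat3 (n : ℕ) := Matrix (Fin n × Fin n × Fin n) (Fin n × Fin n × Fin n) ℂ

/-- `λ - γ • ω_c`. -/
def sh {n : ℕ} (γ : ℂ) (lam : Fin n → ℂ) (c : Fin n) : Fin n → ℂ :=
  fun i => lam i - γ * (if i = c then 1 else 0)

/-- `A¹²`, where the operator on legs 1,2 may depend on the (spectator) index of leg 3. -/
def pl12 {n : ℕ} (A : Fin n → Mat2 n) : Mat3 n := fun p q =>
  if p.2.2 = q.2.2 then A q.2.2 (p.1, p.2.1) (q.1, q.2.1) else 0

def pl13 {n : ℕ} (A : Fin n → Mat2 n) : Mat3 n := fun p q =>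
  if p.2.1 = q.2.1 then A q.2.1 (p.1, p.2.2) (q.1, q.2.2) else 0

def pl23 {n : ℕ} (A : Fin n → Mat2 n) : Mat3 n := fun p q =>
  if p.1 = q.1 then A q.1 (p.2.1, p.2.2) (q.2.1, q.2.2) else 0

/-- The quantum dynamical Yang–Baxter equation with step `γ` at the point `λ`:
`R¹²(λ-γh³) R¹³(λ) R²³(λ-γh¹) = R²³(λ) R¹³(λ-γh²) R¹²(λ)`. -/
def QDYBEat {n : ℕ} (γ : ℂ) (R : (Fin n → ℂ) → Mat2 n) (lam : Fin n → ℂ) : Prop :=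
  pl12 (fun c => R (sh γ lam c)) * pl13 (fun _ => R lam) * pl23 (fun a => R (sh γ lam a)) =
    pl23 (fun _ => R lam) * pl13 (fun b => R (sh γ lam b)) * pl12 (fun _ => R lam)

/-- The basic rational solution:
`R = Σₐ Eₐₐ⊗Eₐₐ + Σ_{a≠b} (1 + 1/(λ_b-λ_a)) Eₐₐ⊗E_bb + Σ_{a≠b} (1/(λ_b-λ_a)) E_ab⊗E_ba`. -/
noncomputable def Rrat {n : ℕ} (lam : Fin n → ℂ) : Mat2 n := fun p q =>
  if p = q then (if p.1 = p.2 then 1 else 1 + 1 / (lam p.2 - lam p.1))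
  else if p.1 = q.2 ∧ p.2 = q.1 ∧ p.1 ≠ p.2 then 1 / (lam p.2 - lam p.1) else 0

noncomputable def Aa {n : ℕ} (lam : Fin n → ℂ) (a b : Fin n) : ℂ :=
  if a = b then 1 else 1 + 1 / (lam b - lam a)

noncomputable def Bb {n : ℕ} (lam : Fin n → ℂ) (a b : Fin n) : ℂ :=
  1 / (lam b - lam a)

lemma Rrat_apply {n : ℕ} (lam : Fin n → ℂ) (p q : Fin n × Fin n) :
    Rrat lam p q =
      (if q = p then Aa lam p.1 p.2 else 0) +
      (if q = (p.2, p.1) ∧ p.1 ≠ p.2 then Bb lam p.1 p.2 else 0) := by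
  rcases p with ⟨a, b⟩; rcases q with ⟨c, d⟩
  simp only [Rrat, Aa, Bb, Prod.mk.injEq, ne_eq]
  by_cases h1 : c = a <;> by_cases h2 : d = b <;> by_cases h3 : c = b <;>
    by_cases h4 : d = a <;> by_cases h5 : a = b <;> subst_vars <;> (try simp_all) <;> simp_all [eq_comm]

lemma pl12_apply {n : ℕ} (f : Fin n → (Fin n → ℂ)) (p r : Fin n × Fin n × Fin n) :
    pl12 (fun c => Rrat (f c)) p r =
      (if r = p then Aa (f p.2.2) p.1 p.2.1 else 0) +
      (if r = (p.2.1, p.1, p.2.2) ∧ p.1 ≠ p.2.1 then Bb (f p.2.2) p.1 p.2.1 else 0) := by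
  rcases p with ⟨a, b, c⟩; rcases r with ⟨d, e, g⟩
  show (if c = g then Rrat (f g) (a, b) (d, e) else 0) = _
  rw [Rrat_apply]
  by_cases hg : c = g
  · subst hg; simp [Prod.ext_iff, and_assoc]
  · have hg' : g ≠ c := fun h => hg h.symm
    simp [hg, hg', Prod.ext_iff]

lemma pl13_apply {n : ℕ} (f : Fin n → (Fin n → ℂ)) (p r : Fin n × Fin n × Fin n) :
    pl13 (fun c => Rrat (f c)) p r =
      (if r = p then Aa (f p.2.1) p.1 p.2.2 else 0) +
      (if r = (p.2.2, p.2.1, p.1) ∧ p.1 ≠ p.2.2 then Bb (f p.2.1) p.1 p.2.2 else 0) := by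
  rcases p with ⟨a, b, c⟩; rcases r with ⟨d, e, g⟩
  show (if b = e then Rrat (f e) (a, c) (d, g) else 0) = _
  rw [Rrat_apply]
  by_cases hg : b = e
  · subst hg; simp [Prod.ext_iff, and_assoc]
  · have hg' : e ≠ b := fun h => hg h.symm
    simp [hg, hg', Prod.ext_iff]

lemma pl23_apply {n : ℕ} (f : Fin n → (Fin n → ℂ)) (p r : Fin n × Fin n × Fin n) :
    pl23 (fun c => Rrat (f c)) p r =
      (if r = p then Aa (f p.1) p.2.1 p.2.2 else 0) +
      (if r = (p.1, p.2.2, p.2.1) ∧ p.2.1 ≠ p.2.2 then Bb (f p.1) p.2.1 p.2.2 else 0) := by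
  rcases p with ⟨a, b, c⟩; rcases r with ⟨d, e, g⟩
  show (if a = d then Rrat (f d) (b, c) (e, g) else 0) = _
  rw [Rrat_apply]
  by_cases hg : a = d
  · subst hg; simp [Prod.ext_iff, and_assoc]
  · have hg' : d ≠ a := fun h => hg h.symm
    simp [hg, hg', Prod.ext_iff]


lemma Rrat_applyc {n : ℕ} (lam : Fin n → ℂ) (p q : Fin n × Fin n) :
    Rrat lam p q =
      (if p = q then Aa lam q.1 q.2 else 0) +
      (if p = (q.2, q.1) ∧ q.1 ≠ q.2 then Bb lam q.2 q.1 else 0) := by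
  rcases p with ⟨a, b⟩; rcases q with ⟨c, d⟩
  simp only [Rrat, Aa, Bb, Prod.mk.injEq, ne_eq]
  by_cases h1 : c = a <;> by_cases h2 : d = b <;> by_cases h3 : c = b <;>
    by_cases h4 : d = a <;> by_cases h5 : a = b <;> subst_vars <;> (try simp_all) <;> simp_all [eq_comm]

lemma pl12_applyc {n : ℕ} (f : Fin n → (Fin n → ℂ)) (r q : Fin n × Fin n × Fin n) :
    pl12 (fun c => Rrat (f c)) r q =
      (if r = q then Aa (f q.2.2) q.1 q.2.1 else 0) +
      (if r = (q.2.1, q.1, q.2.2) ∧ q.1 ≠ q.2.1 then Bb (f q.2.2) q.2.1 q.1 else 0) := by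
  rcases r with ⟨a, b, c⟩; rcases q with ⟨d, e, g⟩
  show (if c = g then Rrat (f g) (a, b) (d, e) else 0) = _
  rw [Rrat_applyc]
  by_cases hg : c = g
  · subst hg; simp [Prod.ext_iff, and_assoc]
  · have hg' : g ≠ c := fun h => hg h.symm
    simp [hg, hg', Prod.ext_iff]

lemma pl23_applyc {n : ℕ} (f : Fin n → (Fin n → ℂ)) (r q : Fin n × Fin n × Fin n) :
    pl23 (fun c => Rrat (f c)) r q =
      (if r = q then Aa (f q.1) q.2.1 q.2.2 else 0) +
      (if r = (q.1, q.2.2, q.2.1) ∧ q.2.1 ≠ q.2.2 then Bb (f q.1) q.2.2 q.2.1 else 0) := by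
  rcases r with ⟨a, b, c⟩; rcases q with ⟨d, e, g⟩
  show (if a = d then Rrat (f d) (b, c) (e, g) else 0) = _
  rw [Rrat_applyc]
  by_cases hg : a = d
  · subst hg; simp [Prod.ext_iff, and_assoc]
  · have hg' : d ≠ a := fun h => hg h.symm
    simp [hg, hg', Prod.ext_iff]


lemma sum_two_delta {α : Type*} [Fintype α] [DecidableEq α] (x y : α) (P : Prop)
    [Decidable P] (u w : ℂ) (g : α → ℂ) :
    ∑ r : α, ((if r = x then u else 0) + (if r = y ∧ P then w else 0)) * g r
      = u * g x + (if P then w * g y else 0) := by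
  simp [add_mul, ite_mul, Finset.sum_add_distrib, ite_and]

/-- The basic rational solution satisfies QDYBE with step 1 (for generic `λ`). -/
theorem basic_rational_satisfies_QDYBE (n : ℕ) (lam : Fin n → ℂ)
    (hgen : ∀ a b : Fin n, a ≠ b → ∀ k : ℤ, lam a - lam b ≠ (k : ℂ)) :
    QDYBEat 1 Rrat lam := by
  have h0 : ∀ x y : Fin n, x ≠ y → lam x - lam y ≠ 0 := fun x y h => by
    simpa using hgen x y h 0
  have hp1 : ∀ x y : Fin n, x ≠ y → lam x - lam y + 1 ≠ 0 := by
    intro x y h hc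
    exact hgen x y h (-1) (by push_cast; linear_combination hc)
  have hm1 : ∀ x y : Fin n, x ≠ y → lam x - lam y - 1 ≠ 0 := by
    intro x y h hc
    exact hgen x y h 1 (by push_cast; linear_combination hc)
  have hq1 : ∀ x y : Fin n, x ≠ y → lam x - (lam y - 1) ≠ 0 := fun x y h hc =>
    hp1 x y h (by linear_combination hc)
  have hq2 : ∀ x y : Fin n, x ≠ y → lam x - 1 - lam y ≠ 0 := fun x y h hc =>
    hm1 x y h (by linear_combination hc)
  have hq3 : ∀ x y : Fin n, x ≠ y → lam x - (lam y + 1) ≠ 0 := fun x y h hc =>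
    hm1 x y h (by linear_combination hc)
  unfold QDYBEat
  apply Matrix.ext
  rintro ⟨a, b, c⟩ ⟨d, e, g⟩
  simp only [Matrix.mul_assoc, Matrix.mul_apply]
  conv_lhs => simp only [pl12_apply, pl13_apply, pl23_applyc]
  conv_rhs => simp only [pl23_apply, pl13_apply, pl12_applyc]
  simp only [sum_two_delta]
  simp only [add_mul, mul_add, ite_mul, mul_ite, mul_zero, zero_mul, zero_add, add_zero,
    ite_and, Finset.sum_add_distrib, Finset.sum_ite_eq', Finset.mem_univ, if_true]
  simp only [Prod.mk.injEq, ne_eq]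
  by_cases hab : a = b <;> by_cases hbc : b = c <;> by_cases hac : a = c <;> subst_vars <;>
    try (exact absurd rfl (by assumption))
  · -- a = b = c (all vars ↦ c)
    by_cases hd : d = c <;> by_cases he : e = c <;> by_cases hg : g = c <;> subst_vars <;>
      simp [*, Aa, Bb, sh]
  · -- a = b ≠ c : p = (b,b,c), pair (b,c), hbc : ¬b = c
    by_cases h1 : d = b <;> by_cases h2 : d = c <;> by_cases h3 : e = b <;>
      by_cases h4 : e = c <;> by_cases h5 : g = b <;> by_cases h6 : g = c <;> subst_vars <;>
      first
        | (exact absurd rfl (by assumption))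
        | (simp [*, Aa, Bb, sh]; done)
        | (simp [*, Aa, Bb, sh];
           field_simp [h0 _ _ hbc, h0 _ _ (Ne.symm hbc), hp1 _ _ hbc, hp1 _ _ (Ne.symm hbc),
             hm1 _ _ hbc, hm1 _ _ (Ne.symm hbc), hq1 _ _ hbc, hq1 _ _ (Ne.symm hbc),
             hq2 _ _ hbc, hq2 _ _ (Ne.symm hbc), hq3 _ _ hbc, hq3 _ _ (Ne.symm hbc)];
           first | ring1 | (left; (first | trivial | ring1)) | (right; (first | trivial | ring1)))
  · -- b = c ≠ a : p = (a,c,c), pair (a,c), hab : ¬a = c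
    by_cases h1 : d = a <;> by_cases h2 : d = c <;> by_cases h3 : e = a <;>
      by_cases h4 : e = c <;> by_cases h5 : g = a <;> by_cases h6 : g = c <;> subst_vars <;>
      first
        | (exact absurd rfl (by assumption))
        | (simp [*, Aa, Bb, sh]; done)
        | (simp [*, Aa, Bb, sh];
           field_simp [h0 _ _ hab, h0 _ _ (Ne.symm hab), hp1 _ _ hab, hp1 _ _ (Ne.symm hab),
             hm1 _ _ hab, hm1 _ _ (Ne.symm hab), hq1 _ _ hab, hq1 _ _ (Ne.symm hab),
             hq2 _ _ hab, hq2 _ _ (Ne.symm hab), hq3 _ _ hab, hq3 _ _ (Ne.symm hab)];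
           first | ring1 | (left; (first | trivial | ring1)) | (right; (first | trivial | ring1)))
  · -- a = c ≠ b : p = (c,b,c), pair (c,b), hab : ¬c = b
    by_cases h1 : d = c <;> by_cases h2 : d = b <;> by_cases h3 : e = c <;>
      by_cases h4 : e = b <;> by_cases h5 : g = c <;> by_cases h6 : g = b <;> subst_vars <;>
      first
        | (exact absurd rfl (by assumption))
        | (simp [*, Aa, Bb, sh]; done)
        | (simp [*, Aa, Bb, sh];
           field_simp [h0 _ _ hab, h0 _ _ (Ne.symm hab), hp1 _ _ hab, hp1 _ _ (Ne.symm hab),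
             hm1 _ _ hab, hm1 _ _ (Ne.symm hab), hq1 _ _ hab, hq1 _ _ (Ne.symm hab),
             hq2 _ _ hab, hq2 _ _ (Ne.symm hab), hq3 _ _ hab, hq3 _ _ (Ne.symm hab)];
           first | ring1 | (left; (first | trivial | ring1)) | (right; (first | trivial | ring1)))
  · -- all distinct
    have hba : b ≠ a := Ne.symm hab
    have hcb : c ≠ b := Ne.symm hbc
    have hca : c ≠ a := Ne.symm hac
    by_cases hda : d = a
    · subst hda
      by_cases heb : e = b
      · subst heb
        by_cases hgc : g = c
        · subst hgc
          simp [hab, hbc, hac, hba, hcb, hca, Aa, Bb, sh]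
          ring
        · simp [hab, hbc, hac, hba, hcb, hca, hgc]
      · by_cases hec : e = c
        · subst hec
          by_cases hgb : g = b
          · subst hgb
            simp [hab, hbc, hac, hba, hcb, hca, Aa, Bb, sh]
            field_simp [h0 _ _ hab, h0 _ _ hba, h0 _ _ hac, h0 _ _ hca, h0 _ _ hbc, h0 _ _ hcb]
          · simp [hab, hbc, hac, hba, hcb, hca, hgb]
        · simp [hab, hbc, hac, hba, hcb, hca, heb, hec]
    · by_cases hdb : d = b
      · subst hdb
        by_cases hea : e = a
        · subst hea
          by_cases hgc : g = c
          · subst hgc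
            simp [hab, hbc, hac, hba, hcb, hca, Aa, Bb, sh]
            field_simp [h0 _ _ hab, h0 _ _ hba, h0 _ _ hac, h0 _ _ hca, h0 _ _ hbc, h0 _ _ hcb]
          · simp [hab, hbc, hac, hba, hcb, hca, hgc]
        · by_cases hec : e = c
          · subst hec
            by_cases hga : g = a
            · subst hga
              simp [hab, hbc, hac, hba, hcb, hca, Aa, Bb, sh]
              field_simp [h0 _ _ hab, h0 _ _ hba, h0 _ _ hac, h0 _ _ hca, h0 _ _ hbc, h0 _ _ hcb]
              first | ring1 | (left; (first | trivial | ring1)) | (right; (first | trivial | ring1))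
            · simp [hab, hbc, hac, hba, hcb, hca, hga]
          · simp [hab, hbc, hac, hba, hcb, hca, hea, hec]
      · by_cases hdc : d = c
        · subst hdc
          by_cases heb : e = b
          · subst heb
            by_cases hga : g = a
            · subst hga
              simp [hab, hbc, hac, hba, hcb, hca, Aa, Bb, sh]
              field_simp [h0 _ _ hab, h0 _ _ hba, h0 _ _ hac, h0 _ _ hca, h0 _ _ hbc, h0 _ _ hcb]
              first | ring1 | (left; (first | trivial | ring1)) | (right; (first | trivial | ring1))
            · simp [hab, hbc, hac, hba, hcb, hca, hga]
          · by_cases hea : e = a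
            · subst hea
              by_cases hgb : g = b
              · subst hgb
                simp [hab, hbc, hac, hba, hcb, hca, Aa, Bb, sh]
                field_simp [h0 _ _ hab, h0 _ _ hba, h0 _ _ hac, h0 _ _ hca, h0 _ _ hbc, h0 _ _ hcb]
                first | ring1 | (left; (first | trivial | ring1)) | (right; (first | trivial | ring1))
              · simp [hab, hbc, hac, hba, hcb, hca, hgb]
            · simp [hab, hbc, hac, hba, hcb, hca, hea, heb]
        · simp [hab, hbc, hac, hba, hcb, hca, hda, hdb, hdc]


end Stmt0
end

section
/- Fix q ∈ ℂ with q ≠ 0 and q² ≠ 1. Define R(λ) ∈ End(ℂⁿ⊗ℂⁿ) by R = Σₐ E_{aa}⊗E_{aa} + Σ_{a≠b} α_{ab}(λ) E_{aa}⊗E_{bb} + Σ_{a≠b} β_{ab}(λ) E_{ab}⊗E_{ba}, where β_{ab}(λ) = (q−1)/(q^{λ_b−λ_a} − 1) and α_{ab}(λ) = q + β_{ab}(λ), and q^x denotes e^{x log q} for a fixed branch. Then R satisfies the quantum dynamical Yang–Baxter equation with step 1: R¹²(λ − h³) R¹³(λ) R²³(λ − h¹) = R²³(λ) R¹³(λ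 − h²) R¹²(λ), for generic λ ∈ ℂⁿ. -/
/-!
STATEMENT 2: the basic trigonometric solution of QDYBE (step 1) on ℂⁿ ⊗ ℂⁿ,
with `β_ab = (q-1)/(q^{λ_b-λ_a}-1)`, `α_ab = q + β_ab`, where
`q^x := exp(x · log q)` for the principal branch of the logarithm.
-/

namespace Stmt2

abbrev Mat2 (n : ℕ) := Matrix (Fin n × Fin n) (Fin n × Fin n) ℂ
abbrev Mat3 (n : ℕ) := Matrix (Fin n × Fin n × Fin n) (Fin n × Fin n × Fin n) ℂ

def sh {n : ℕ} (γ : ℂ) (lam : Fin n → ℂ) (c : Fin n) : Fin n → ℂ :=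
  fun i => lam i - γ * (if i = c then 1 else 0)

def pl12 {n : ℕ} (A : Fin n → Mat2 n) : Mat3 n := fun p q =>
  if p.2.2 = q.2.2 then A q.2.2 (p.1, p.2.1) (q.1, q.2.1) else 0

def pl13 {n : ℕ} (A : Fin n → Mat2 n) : Mat3 n := fun p q =>
  if p.2.1 = q.2.1 then A q.2.1 (p.1, p.2.2) (q.1, q.2.2) else 0

def pl23 {n : ℕ} (A : Fin n → Mat2 n) : Mat3 n := fun p q =>
  if p.1 = q.1 then A q.1 (p.2.1, p.2.2) (q.2.1, q.2.2) else 0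

def QDYBEat {n : ℕ} (γ : ℂ) (R : (Fin n → ℂ) → Mat2 n) (lam : Fin n → ℂ) : Prop :=
  pl12 (fun c => R (sh γ lam c)) * pl13 (fun _ => R lam) * pl23 (fun a => R (sh γ lam a)) =
    pl23 (fun _ => R lam) * pl13 (fun b => R (sh γ lam b)) * pl12 (fun _ => R lam)

/-- `q^x = e^{x log q}` for a fixed branch of the logarithm. -/
noncomputable def qpow (q x : ℂ) : ℂ := Complex.exp (x * Complex.log q)

/-- The basic trigonometric solution. -/
noncomputable def Rtrig {n : ℕ} (q : ℂ) (lam : Fin n → ℂ) : Mat2 n := fun p q' =>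
  if p = q' then
    (if p.1 = p.2 then 1 else q + (q - 1) / (qpow q (lam p.2 - lam p.1) - 1))
  else if p.1 = q'.2 ∧ p.2 = q'.1 ∧ p.1 ≠ p.2 then
    (q - 1) / (qpow q (lam p.2 - lam p.1) - 1)
  else 0

-- auxiliary
open Classical
abbrev I3 (n : ℕ) := Fin n × Fin n × Fin n
noncomputable def mono {n : ℕ} (C : I3 n → Prop) (σ : I3 n → I3 n) (f : I3 n → ℂ) :
    Mat3 n := fun p r => if C p ∧ r = σ p then f p else 0

lemma mono_mul_mono {n : ℕ} (C C' : I3 n → Prop) (σ σ' : I3 n → I3 n) (f f' : I3 n → ℂ) :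
    mono C σ f * mono C' σ' f' =
      mono (fun p => C p ∧ C' (σ p)) (fun p => σ' (σ p)) (fun p => f p * f' (σ p)) := by
  ext p r
  rw [Matrix.mul_apply]
  by_cases hC : C p
  · simp only [mono, hC, true_and]
    rw [Finset.sum_eq_single (σ p)]
    · by_cases hC' : C' (σ p) <;> simp [hC']
    · intro j _ hj; simp [show ¬(j = σ p) from hj]
    · simp
  · simp [mono, hC]

noncomputable def dco {n : ℕ} (q : ℂ) (lam : Fin n → ℂ) (i j : Fin n) : ℂ :=
  if i = j then 1 else q + (q - 1) / (qpow q (lam j - lam i) - 1)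
noncomputable def bco {n : ℕ} (q : ℂ) (lam : Fin n → ℂ) (i j : Fin n) : ℂ :=
  (q - 1) / (qpow q (lam j - lam i) - 1)

lemma Rtrig_apply {n : ℕ} (q : ℂ) (lam : Fin n → ℂ) (p r : Fin n × Fin n) :
    Rtrig q lam p r = (if r = p then dco q lam p.1 p.2 else 0)
      + (if p.1 ≠ p.2 ∧ r = (p.2, p.1) then bco q lam p.1 p.2 else 0) := by
  obtain ⟨i, j⟩ := p
  obtain ⟨k, l⟩ := r
  by_cases e1 : i = k <;> by_cases e2 : j = l <;> by_cases e3 : i = l <;>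
    by_cases e4 : j = k <;> by_cases e5 : i = j <;>
    simp_all [Rtrig, dco, bco, Prod.mk.injEq, eq_comm]

lemma pl12_decomp {n : ℕ} (A : Fin n → Mat2 n) (d b : Fin n → Fin n → Fin n → ℂ)
    (hA : ∀ c p r, A c p r = (if r = p then d c p.1 p.2 else 0)
      + (if p.1 ≠ p.2 ∧ r = (p.2, p.1) then b c p.1 p.2 else 0)) :
    pl12 A = mono (fun _ => True) id (fun p => d p.2.2 p.1 p.2.1)
      + mono (fun p => p.1 ≠ p.2.1) (fun p => (p.2.1, p.1, p.2.2)) (fun p => b p.2.2 p.1 p.2.1) := by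
  ext ⟨a, b', c⟩ ⟨a', b'', c'⟩
  simp only [pl12, Matrix.add_apply, mono, hA, Prod.mk.injEq, Prod.ext_iff, true_and, id]
  by_cases h3 : c = c' <;> by_cases h1 : a' = a <;> by_cases h2 : b'' = b' <;>
    by_cases h4 : a = b' <;> simp_all [eq_comm] <;> try tauto

lemma pl13_decomp {n : ℕ} (A : Fin n → Mat2 n) (d b : Fin n → Fin n → Fin n → ℂ)
    (hA : ∀ c p r, A c p r = (if r = p then d c p.1 p.2 else 0)
      + (if p.1 ≠ p.2 ∧ r = (p.2, p.1) then b c p.1 p.2 else 0)) :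
    pl13 A = mono (fun _ => True) id (fun p => d p.2.1 p.1 p.2.2)
      + mono (fun p => p.1 ≠ p.2.2) (fun p => (p.2.2, p.2.1, p.1)) (fun p => b p.2.1 p.1 p.2.2) := by
  ext ⟨a, b', c⟩ ⟨a', b'', c'⟩
  simp only [pl13, Matrix.add_apply, mono, hA, Prod.mk.injEq, Prod.ext_iff, true_and, id]
  by_cases h3 : b' = b'' <;> by_cases h1 : a' = a <;> by_cases h2 : c' = c <;>
    by_cases h4 : a = c <;> simp_all [eq_comm]

lemma pl23_decomp {n : ℕ} (A : Fin n → Mat2 n) (d b : Fin n → Fin n → Fin n → ℂ)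
    (hA : ∀ c p r, A c p r = (if r = p then d c p.1 p.2 else 0)
      + (if p.1 ≠ p.2 ∧ r = (p.2, p.1) then b c p.1 p.2 else 0)) :
    pl23 A = mono (fun _ => True) id (fun p => d p.1 p.2.1 p.2.2)
      + mono (fun p => p.2.1 ≠ p.2.2) (fun p => (p.1, p.2.2, p.2.1)) (fun p => b p.1 p.2.1 p.2.2) := by
  ext ⟨a, b', c⟩ ⟨a', b'', c'⟩
  simp only [pl23, Matrix.add_apply, mono, hA, Prod.mk.injEq, Prod.ext_iff, true_and, id]
  by_cases h3 : a = a' <;> by_cases h1 : b'' = b' <;> by_cases h2 : c' = c <;>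
    by_cases h4 : b' = c <;> simp_all [eq_comm]



lemma qpow_sub (q u v : ℂ) : qpow q (u - v) = qpow q u / qpow q v := by
  simp [qpow, sub_mul, Complex.exp_sub]
lemma qpow_add (q u v : ℂ) : qpow q (u + v) = qpow q u * qpow q v := by
  simp [qpow, add_mul, Complex.exp_add]
lemma qpow_one (q : ℂ) (hq : q ≠ 0) : qpow q 1 = q := by simp [qpow, Complex.exp_log hq]
lemma qpow_zero (q : ℂ) : qpow q 0 = 1 := by simp [qpow]
lemma qpow_neg_one (q : ℂ) (hq : q ≠ 0) : qpow q (-1) = q⁻¹ := by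
  simp [qpow, neg_mul, Complex.exp_neg, Complex.exp_log hq]
lemma qpow_int (q : ℂ) (hq : q ≠ 0) (k : ℤ) : qpow q ((k:ℂ)) = q ^ k := by
  rw [qpow, Complex.exp_int_mul, Complex.exp_log hq]

lemma sh_sub {n : ℕ} (lam : Fin n → ℂ) (c i j : Fin n) :
    sh 1 lam c j - sh 1 lam c i =
      lam j - lam i + ((if i = c then (1:ℂ) else 0) - (if j = c then (1:ℂ) else 0)) := by
  simp [sh]; ring


set_option maxHeartbeats 2000000 in
/-- The basic trigonometric solution satisfies QDYBE with step 1 (for generic λ). -/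
theorem basic_trigonometric_satisfies_QDYBE (n : ℕ) (q : ℂ) (hq : q ≠ 0) (hq2 : q ^ 2 ≠ 1)
    (lam : Fin n → ℂ)
    (hgen : ∀ a b : Fin n, a ≠ b → ∀ k : ℤ, qpow q (lam a - lam b + (k : ℂ)) ≠ 1) :
    QDYBEat 1 (Rtrig q) lam := by
  classical
  have hX : ∀ i : Fin n, qpow q (lam i) ≠ 0 := fun i => Complex.exp_ne_zero _
  have key : ∀ (i j : Fin n), i ≠ j → ∀ k : ℤ, qpow q (lam i) * q ^ k ≠ qpow q (lam j) := by
    intro i j hij k h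
    apply hgen i j hij k
    rw [show lam i - lam j + (k:ℂ) = (lam i + (k:ℂ)) - lam j by ring, qpow_sub, qpow_add,
      qpow_int q hq, h, div_self (hX j)]
  have W0 : ∀ (i j : Fin n), i ≠ j → qpow q (lam j) - qpow q (lam i) ≠ 0 := by
    intro i j hij
    have := key j i hij.symm 0
    simp only [zpow_zero, mul_one] at this
    exact sub_ne_zero.mpr this
  have W1 : ∀ (i j : Fin n), i ≠ j → qpow q (lam j) * q - qpow q (lam i) ≠ 0 := by
    intro i j hij
    have := key j i hij.symm 1
    simp only [zpow_one] at this
    exact sub_ne_zero.mpr this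
  have W2 : ∀ (i j : Fin n), i ≠ j → qpow q (lam j) - qpow q (lam i) * q ≠ 0 := by
    intro i j hij
    have := key i j hij 1
    simp only [zpow_one] at this
    exact sub_ne_zero.mpr (Ne.symm this)
  have W1' : ∀ (i j : Fin n), i ≠ j → q * qpow q (lam j) - qpow q (lam i) ≠ 0 := by
    intro i j hij; rw [mul_comm]; exact W1 i j hij
  have W2' : ∀ (i j : Fin n), i ≠ j → qpow q (lam j) - q * qpow q (lam i) ≠ 0 := by
    intro i j hij; rw [mul_comm q]; exact W2 i j hij
  have hq1 : q - 1 ≠ 0 := by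
    intro h; rw [sub_eq_zero] at h; apply hq2; rw [h]; norm_num
  have hqp : q + 1 ≠ 0 := by
    intro h; apply hq2
    have : q = -1 := by linear_combination h
    rw [this]; ring
  unfold QDYBEat
  rw [pl12_decomp (fun c => Rtrig q (sh 1 lam c)) (fun c i j => dco q (sh 1 lam c) i j)
      (fun c i j => bco q (sh 1 lam c) i j) (fun c p r => Rtrig_apply q (sh 1 lam c) p r),
    pl13_decomp (fun _ => Rtrig q lam) (fun _ i j => dco q lam i j)
      (fun _ i j => bco q lam i j) (fun _ p r => Rtrig_apply q lam p r),
    pl23_decomp (fun a => Rtrig q (sh 1 lam a)) (fun a i j => dco q (sh 1 lam a) i j)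
      (fun a i j => bco q (sh 1 lam a) i j) (fun a p r => Rtrig_apply q (sh 1 lam a) p r),
    pl23_decomp (fun _ => Rtrig q lam) (fun _ i j => dco q lam i j)
      (fun _ i j => bco q lam i j) (fun _ p r => Rtrig_apply q lam p r),
    pl13_decomp (fun b => Rtrig q (sh 1 lam b)) (fun b i j => dco q (sh 1 lam b) i j)
      (fun b i j => bco q (sh 1 lam b) i j) (fun b p r => Rtrig_apply q (sh 1 lam b) p r),
    pl12_decomp (fun _ => Rtrig q lam) (fun _ i j => dco q lam i j)
      (fun _ i j => bco q lam i j) (fun _ p r => Rtrig_apply q lam p r)]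
  simp only [add_mul, mul_add, mono_mul_mono]
  ext ⟨a, b, c⟩ r
  simp only [Matrix.add_apply, mono, id_eq, true_and, and_true]
  by_cases hab : a = b
  · by_cases hbc : b = c
    · -- a = b = c
      subst hab; subst hbc
      by_cases h1 : r = (a, a, a)
      · subst h1
        simp [dco]
      · simp [h1, dco]
    · -- a = b ≠ c
      subst hab
      by_cases h1 : r = (a, a, c)
      · subst h1
        simp [Prod.mk.injEq, hbc, Ne.symm hbc, dco, bco, sh_sub,
          qpow_add, qpow_sub, qpow_one q hq, qpow_zero, qpow_neg_one q hq]
      · by_cases h2 : r = (a, c, a)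
        · subst h2
          simp [Prod.mk.injEq, hbc, Ne.symm hbc, dco, bco, sh_sub,
            qpow_add, qpow_sub, qpow_one q hq, qpow_zero, qpow_neg_one q hq]
          field_simp [hX a, hX c, hq, hq1, hqp, W0 a c hbc, W0 c a (Ne.symm hbc),
            W1 a c hbc, W1 c a (Ne.symm hbc), W2 a c hbc, W2 c a (Ne.symm hbc),
              W1' a c hbc, W1' c a (Ne.symm hbc), W2' a c hbc, W2' c a (Ne.symm hbc)]
          ring
        · by_cases h3 : r = (c, a, a)
          · subst h3
            simp [Prod.mk.injEq, hbc, Ne.symm hbc, dco, bco, sh_sub,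
              qpow_add, qpow_sub, qpow_one q hq, qpow_zero, qpow_neg_one q hq]
            field_simp [hX a, hX c, hq, hq1, hqp, W0 a c hbc, W0 c a (Ne.symm hbc),
              W1 a c hbc, W1 c a (Ne.symm hbc), W2 a c hbc, W2 c a (Ne.symm hbc),
              W1' a c hbc, W1' c a (Ne.symm hbc), W2' a c hbc, W2' c a (Ne.symm hbc)]
            ring
          · simp [h1, h2, h3]
  · by_cases hbc : b = c
    · -- a ≠ b = c
      subst hbc
      by_cases h1 : r = (a, b, b)
      · subst h1
        simp [Prod.mk.injEq, hab, Ne.symm hab, dco, bco, sh_sub,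
          qpow_add, qpow_sub, qpow_one q hq, qpow_zero, qpow_neg_one q hq]
      · by_cases h2 : r = (b, a, b)
        · subst h2
          simp [Prod.mk.injEq, hab, Ne.symm hab, dco, bco, sh_sub,
            qpow_add, qpow_sub, qpow_one q hq, qpow_zero, qpow_neg_one q hq]
          field_simp [hX a, hX b, hq, hq1, hqp, W0 a b hab, W0 b a (Ne.symm hab),
            W1 a b hab, W1 b a (Ne.symm hab), W2 a b hab, W2 b a (Ne.symm hab),
              W1' a b hab, W1' b a (Ne.symm hab), W2' a b hab, W2' b a (Ne.symm hab)]
          ring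
        · by_cases h3 : r = (b, b, a)
          · subst h3
            simp [Prod.mk.injEq, hab, Ne.symm hab, dco, bco, sh_sub,
              qpow_add, qpow_sub, qpow_one q hq, qpow_zero, qpow_neg_one q hq]
            field_simp [hX a, hX b, hq, hq1, hqp, W0 a b hab, W0 b a (Ne.symm hab),
              W1 a b hab, W1 b a (Ne.symm hab), W2 a b hab, W2 b a (Ne.symm hab),
              W1' a b hab, W1' b a (Ne.symm hab), W2' a b hab, W2' b a (Ne.symm hab)]
            ring
          · simp [h1, h2, h3]
    · by_cases hac : a = c
      · -- a = c ≠ b, a ≠ b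
        subst hac
        by_cases h1 : r = (a, b, a)
        · subst h1
          simp [Prod.mk.injEq, hab, Ne.symm hab, dco, bco, sh_sub,
            qpow_add, qpow_sub, qpow_one q hq, qpow_zero, qpow_neg_one q hq]
          field_simp [hX a, hX b, hq, hq1, hqp, W0 a b hab, W0 b a (Ne.symm hab),
            W1 a b hab, W1 b a (Ne.symm hab), W2 a b hab, W2 b a (Ne.symm hab),
              W1' a b hab, W1' b a (Ne.symm hab), W2' a b hab, W2' b a (Ne.symm hab)]
          ring
        · by_cases h2 : r = (a, a, b)
          · subst h2
            simp [Prod.mk.injEq, hab, Ne.symm hab, dco, bco, sh_sub,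
              qpow_add, qpow_sub, qpow_one q hq, qpow_zero, qpow_neg_one q hq]
            field_simp [hX a, hX b, hq, hq1, hqp, W0 a b hab, W0 b a (Ne.symm hab),
              W1 a b hab, W1 b a (Ne.symm hab), W2 a b hab, W2 b a (Ne.symm hab),
              W1' a b hab, W1' b a (Ne.symm hab), W2' a b hab, W2' b a (Ne.symm hab)]
            ring
          · by_cases h3 : r = (b, a, a)
            · subst h3
              simp [Prod.mk.injEq, hab, Ne.symm hab, dco, bco, sh_sub,
                qpow_add, qpow_sub, qpow_one q hq, qpow_zero, qpow_neg_one q hq]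
              field_simp [hX a, hX b, hq, hq1, hqp, W0 a b hab, W0 b a (Ne.symm hab),
                W1 a b hab, W1 b a (Ne.symm hab), W2 a b hab, W2 b a (Ne.symm hab),
              W1' a b hab, W1' b a (Ne.symm hab), W2' a b hab, W2' b a (Ne.symm hab)]
              ring
            · simp [h1, h2, h3]
      · -- all distinct
        have SIMP : True := trivial
        by_cases h1 : r = (a, b, c)
        · subst h1
          simp [Prod.mk.injEq, hab, hbc, hac, Ne.symm hab, Ne.symm hbc, Ne.symm hac,
            dco, bco, sh_sub, qpow_add, qpow_sub, qpow_one q hq, qpow_zero, qpow_neg_one q hq]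
          ring
        · by_cases h2 : r = (b, a, c)
          · subst h2
            simp [Prod.mk.injEq, hab, hbc, hac, Ne.symm hab, Ne.symm hbc, Ne.symm hac,
              dco, bco, sh_sub, qpow_add, qpow_sub, qpow_one q hq, qpow_zero, qpow_neg_one q hq]
            ring
          · by_cases h3 : r = (a, c, b)
            · subst h3
              simp [Prod.mk.injEq, hab, hbc, hac, Ne.symm hab, Ne.symm hbc, Ne.symm hac,
                dco, bco, sh_sub, qpow_add, qpow_sub, qpow_one q hq, qpow_zero, qpow_neg_one q hq]
              ring
            · by_cases h4 : r = (c, b, a)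
              · subst h4
                simp [Prod.mk.injEq, hab, hbc, hac, Ne.symm hab, Ne.symm hbc, Ne.symm hac,
                  dco, bco, sh_sub, qpow_add, qpow_sub, qpow_one q hq, qpow_zero, qpow_neg_one q hq]
                field_simp [hX a, hX b, hX c, hq, hq1, hqp,
                  W0 a b hab, W0 b a (Ne.symm hab), W0 b c hbc, W0 c b (Ne.symm hbc),
                  W0 a c hac, W0 c a (Ne.symm hac)]
                ring
              · by_cases h5 : r = (c, a, b)
                · subst h5
                  simp [Prod.mk.injEq, hab, hbc, hac, Ne.symm hab, Ne.symm hbc, Ne.symm hac,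
                    dco, bco, sh_sub, qpow_add, qpow_sub, qpow_one q hq, qpow_zero, qpow_neg_one q hq]
                  field_simp [hX a, hX b, hX c, hq, hq1, hqp,
                    W0 a b hab, W0 b a (Ne.symm hab), W0 b c hbc, W0 c b (Ne.symm hbc),
                    W0 a c hac, W0 c a (Ne.symm hac)]
                  ring
                · by_cases h6 : r = (b, c, a)
                  · subst h6
                    simp [Prod.mk.injEq, hab, hbc, hac, Ne.symm hab, Ne.symm hbc, Ne.symm hac,
                      dco, bco, sh_sub, qpow_add, qpow_sub, qpow_one q hq, qpow_zero, qpow_neg_one q hq]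
                    field_simp [hX a, hX b, hX c, hq, hq1, hqp,
                      W0 a b hab, W0 b a (Ne.symm hab), W0 b c hbc, W0 c b (Ne.symm hbc),
                      W0 a c hac, W0 c a (Ne.symm hac)]
                    ring
                  · simp [h1, h2, h3, h4, h5, h6]

end Stmt2
end

section
/- Let R(λ) be the basic trigonometric dynamical R-matrix with parameter q (q² ≠ 1): β_{ab} = (q−1)/(q^{λ_b−λ_a}−1), α_{ab} = q + β_{ab}. Then for generic λ, (PR(λ) − 1)(PR(λ) + q) = 0, i.e. R satisfies the Hecke condition with parameter q. -/
/-!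
STATEMENT 3: the basic trigonometric dynamical R-matrix satisfies the Hecke
condition `(PR(λ) - 1)(PR(λ) + q) = 0` for generic λ (q² ≠ 1).
-/

namespace Stmt3

abbrev Mat2 (n : ℕ) := Matrix (Fin n × Fin n) (Fin n × Fin n) ℂ

noncomputable def qpow (q x : ℂ) : ℂ := Complex.exp (x * Complex.log q)

/-- The basic trigonometric solution:
`β_ab = (q-1)/(q^{λ_b-λ_a}-1)`, `α_ab = q + β_ab`. -/
noncomputable def Rtrig {n : ℕ} (q : ℂ) (lam : Fin n → ℂ) : Mat2 n := fun p q' =>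
  if p = q' then
    (if p.1 = p.2 then 1 else q + (q - 1) / (qpow q (lam p.2 - lam p.1) - 1))
  else if p.1 = q'.2 ∧ p.2 = q'.1 ∧ p.1 ≠ p.2 then
    (q - 1) / (qpow q (lam p.2 - lam p.1) - 1)
  else 0

/-- The flip on ℂⁿ ⊗ ℂⁿ. -/
def P (n : ℕ) : Mat2 n := fun p q => if p = (q.2, q.1) then 1 else 0

noncomputable def B {n : ℕ} (q : ℂ) (lam : Fin n → ℂ) (a b : Fin n) : ℂ :=
  (q - 1) / (qpow q (lam a - lam b) - 1)

lemma qpow_neg (q x : ℂ) : qpow q (-x) = (qpow q x)⁻¹ := by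
  simp [qpow, neg_mul, Complex.exp_neg]

lemma Bsum {n : ℕ} (q : ℂ) (lam : Fin n → ℂ)
    (hgen : ∀ a b : Fin n, a ≠ b → qpow q (lam a - lam b) ≠ 1)
    (a b : Fin n) (hab : a ≠ b) : B q lam a b + B q lam b a = 1 - q := by
  have hx1 : qpow q (lam a - lam b) ≠ 1 := hgen a b hab
  have hx0 : qpow q (lam a - lam b) ≠ 0 := Complex.exp_ne_zero _
  have hinv : qpow q (lam b - lam a) = (qpow q (lam a - lam b))⁻¹ := by
    rw [← qpow_neg]; ring_nf
  set x := qpow q (lam a - lam b) with hx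
  have h1 : x - 1 ≠ 0 := sub_ne_zero.mpr hx1
  have h2 : x⁻¹ - 1 ≠ 0 := by
    rw [← hinv]; exact sub_ne_zero.mpr (hgen b a hab.symm)
  have h1' : (1 : ℂ) - x ≠ 0 := fun h => h1 (by linear_combination -h)
  rw [B, B, hinv, ← hx]
  field_simp
  ring

lemma Pmul {n : ℕ} (A : Mat2 n) (p r : Fin n × Fin n) :
    (P n * A) p r = A (p.2, p.1) r := by
  rw [Matrix.mul_apply, Finset.sum_eq_single (p.2, p.1)]
  · simp [P]
  · intro s _ hs
    have h : p ≠ (s.2, s.1) := by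
      rintro rfl
      exact hs rfl
    simp [P, h]
  · simp

lemma Ment_diag {n : ℕ} (q : ℂ) (lam : Fin n → ℂ) (a : Fin n) (r : Fin n × Fin n) :
    (P n * Rtrig q lam) (a, a) r = if r = (a, a) then 1 else 0 := by
  rw [Pmul]
  simp only [Rtrig]
  by_cases h : r = (a, a)
  · subst h; simp
  · have h' : (a, a) ≠ r := fun hh => h hh.symm
    simp [h', h]

lemma Ment_off {n : ℕ} (q : ℂ) (lam : Fin n → ℂ) (a b : Fin n) (hab : a ≠ b)
    (r : Fin n × Fin n) :
    (P n * Rtrig q lam) (a, b) r =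
      if r = (a, b) then B q lam a b
      else if r = (b, a) then q + B q lam a b else 0 := by
  rw [Pmul]
  simp only [Rtrig, B]
  by_cases h1 : r = (b, a)
  · subst h1
    have : a ≠ b := hab
    simp [hab, hab.symm, Prod.ext_iff]
  · by_cases h2 : r = (a, b)
    · subst h2
      have hne : (b, a) ≠ (a, b) := by
        simp [Prod.ext_iff, hab.symm]
      simp [hne, hab.symm]
    · have hne : (b, a) ≠ r := fun hh => h1 hh.symm
      have hcond : ¬ (b = r.2 ∧ a = r.1 ∧ b ≠ a) := by
        rintro ⟨hb, ha, -⟩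
        exact h2 (Prod.ext_iff.mpr ⟨ha.symm, hb.symm⟩)
      simp [hne, hcond, h1, h2]

lemma Msq {n : ℕ} (q : ℂ) (lam : Fin n → ℂ)
    (hgen : ∀ a b : Fin n, a ≠ b → qpow q (lam a - lam b) ≠ 1) :
    (P n * Rtrig q lam) * (P n * Rtrig q lam)
      = (1 - q) • (P n * Rtrig q lam) + q • (1 : Mat2 n) := by
  set M := P n * Rtrig q lam with hM
  ext p r
  obtain ⟨a, b⟩ := p
  rw [Matrix.mul_apply]
  by_cases hab : a = b
  · subst hab
    have hrow : ∀ s, M (a, a) s = if s = (a, a) then 1 else 0 := Ment_diag q lam a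
    rw [Finset.sum_congr rfl (fun s _ => by rw [hrow s])]
    simp only [Matrix.add_apply, Matrix.smul_apply, Matrix.one_apply, smul_eq_mul]
    rw [hrow r]
    by_cases h : r = (a, a)
    · subst h
      rw [Finset.sum_eq_single (a, a)]
      · simp [hrow]
      · intro s _ hs; simp [hs]
      · simp
    · rw [Finset.sum_eq_zero]
      · have : ¬ ((a, a) = r) := fun hh => h hh.symm
        simp [h, this]
      · intro s _
        by_cases hs : s = (a, a)
        · subst hs; simp [hrow, h]
        · simp [hs]
  · have hrow : ∀ s, M (a, b) s =
        if s = (a, b) then B q lam a b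
        else if s = (b, a) then q + B q lam a b else 0 := Ment_off q lam a b hab
    have hrow' : ∀ s, M (b, a) s =
        if s = (b, a) then B q lam b a
        else if s = (a, b) then q + B q lam b a else 0 :=
      Ment_off q lam b a (Ne.symm hab)
    have hne : ((a, b) : Fin n × Fin n) ≠ (b, a) := by
      simp [Prod.ext_iff, hab]
    have hsplit : ∀ s : Fin n × Fin n, M (a, b) s * M s r =
        (if s = (a, b) then B q lam a b * M (a, b) r else 0)
        + (if s = (b, a) then (q + B q lam a b) * M (b, a) r else 0) := by
      intro s
      rw [hrow s]
      by_cases h1 : s = (a, b)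
      · subst h1; simp [hne]
      · by_cases h2 : s = (b, a)
        · subst h2; simp [h1]
        · simp [h1, h2]
    rw [Finset.sum_congr rfl (fun s _ => hsplit s), Finset.sum_add_distrib,
      Finset.sum_ite_eq' Finset.univ, Finset.sum_ite_eq' Finset.univ]
    simp only [Finset.mem_univ, if_true]
    have hkey : B q lam a b + B q lam b a = 1 - q := Bsum q lam hgen a b hab
    simp only [Matrix.add_apply, Matrix.smul_apply, Matrix.one_apply, smul_eq_mul]
    rw [hrow r, hrow' r]
    by_cases h1 : r = (a, b)
    · subst h1
      simp [hne, Ne.symm hne]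
      linear_combination (q + B q lam a b) * hkey
    · by_cases h2 : r = (b, a)
      · subst h2
        simp [hne, Ne.symm hne, h1]
        linear_combination (q + B q lam a b) * hkey
      · have h3 : ¬ ((a, b) = r) := fun hh => h1 hh.symm
        simp [h1, h2, h3]

/-- Hecke condition with parameter q for the basic trigonometric solution. -/
theorem basic_trigonometric_Hecke (n : ℕ) (q : ℂ) (hq : q ≠ 0) (hq2 : q ^ 2 ≠ 1)
    (lam : Fin n → ℂ)
    (hgen : ∀ a b : Fin n, a ≠ b → qpow q (lam a - lam b) ≠ 1) :
    (P n * Rtrig q lam - 1) * (P n * Rtrig q lam + q • (1 : Mat2 n)) = 0 := by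
  set M := P n * Rtrig q lam with hM
  have h2 : M * M = (1 - q) • M + q • (1 : Mat2 n) := Msq q lam hgen
  have : (M - 1) * (M + q • (1 : Mat2 n))
      = M * M + q • M - M - q • (1 : Mat2 n) := by
    rw [sub_mul, mul_add, one_mul, mul_smul_comm, mul_one]
    module
  rw [this, h2]
  module

end Stmt3
end

section
/- Let V = ℂⁿ with basis v₁,…,vₙ of weights ω₁,…,ωₙ, and let R(λ) be a quantum dynamical R-matrix of the form R = Σₐ E_{aa}⊗E_{aa} + Σ_{a≠b} α_{ab} E_{aa}⊗E_{bb} + Σ_{a≠b} β_{ab} E_{ab}⊗E_{ba} with step γ. Let φ_{ab}(λ) be meromorphic functions with φ_{ab} = φ_{ba}^{-1} and satisfying the closedness condition φ_{ab}(λ)φ_{bc}(λ)φ_{ca}(λ) = φ_{ab}(λ−γω_c)φ_{bc}(λ−γω_a)φ_{ca}(λ−γω_b) for all a,b,c. Then the twisted matrix R' obtained by replacing α_{ab} by α_{ab}φ_{ab} (keeping β_{ab} and the diagonal terms unchanged) again satisfies QDYBE with step γ. -/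
/-!
STATEMENT 6: twisting a quantum dynamical R-matrix of the standard 𝔰𝔩ₙ-type
form by a closed multiplicative 2-form `φ` (replacing `α_ab` by `α_ab · φ_ab`)
again yields a solution of QDYBE with step γ.
-/

namespace Stmt6

abbrev Mat2 (n : ℕ) := Matrix (Fin n × Fin n) (Fin n × Fin n) ℂ
abbrev Mat3 (n : ℕ) := Matrix (Fin n × Fin n × Fin n) (Fin n × Fin n × Fin n) ℂ

/-- `λ - γ • ω_c` where `ω_c` is the weight of the basis vector `v_c`. -/
def sh {n : ℕ} (γ : ℂ) (lam : Fin n → ℂ) (c : Fin n) : Fin n → ℂ :=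
  fun i => lam i - γ * (if i = c then 1 else 0)

def pl12 {n : ℕ} (A : Fin n → Mat2 n) : Mat3 n := fun p q =>
  if p.2.2 = q.2.2 then A q.2.2 (p.1, p.2.1) (q.1, q.2.1) else 0

def pl13 {n : ℕ} (A : Fin n → Mat2 n) : Mat3 n := fun p q =>
  if p.2.1 = q.2.1 then A q.2.1 (p.1, p.2.2) (q.1, q.2.2) else 0

def pl23 {n : ℕ} (A : Fin n → Mat2 n) : Mat3 n := fun p q =>
  if p.1 = q.1 then A q.1 (p.2.1, p.2.2) (q.2.1, q.2.2) else 0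

def QDYBEat {n : ℕ} (γ : ℂ) (R : (Fin n → ℂ) → Mat2 n) (lam : Fin n → ℂ) : Prop :=
  pl12 (fun c => R (sh γ lam c)) * pl13 (fun _ => R lam) * pl23 (fun a => R (sh γ lam a)) =
    pl23 (fun _ => R lam) * pl13 (fun b => R (sh γ lam b)) * pl12 (fun _ => R lam)

/-- The R-matrix of the standard form
`R = Σₐ Eₐₐ⊗Eₐₐ + Σ_{a≠b} α_ab Eₐₐ⊗E_bb + Σ_{a≠b} β_ab E_ab⊗E_ba`. -/
def Rof {n : ℕ} (α β : (Fin n → ℂ) → Fin n → Fin n → ℂ) (lam : Fin n → ℂ) : Mat2 n :=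
  fun p q =>
    if p = q then (if p.1 = p.2 then 1 else α lam p.1 p.2)
    else if p.1 = q.2 ∧ p.2 = q.1 ∧ p.1 ≠ p.2 then β lam p.1 p.2 else 0

-- ### auxiliary infrastructure

abbrev T3 (n : ℕ) := Fin n × Fin n × Fin n

def s12 {n : ℕ} (p : T3 n) : T3 n := (p.2.1, p.1, p.2.2)
def s13 {n : ℕ} (p : T3 n) : T3 n := (p.2.2, p.2.1, p.1)
def s23 {n : ℕ} (p : T3 n) : T3 n := (p.1, p.2.2, p.2.1)
def rr1 {n : ℕ} (p : T3 n) : T3 n := (p.2.2, p.1, p.2.1)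
def rr2 {n : ℕ} (p : T3 n) : T3 n := (p.2.1, p.2.2, p.1)

/-- row-sparse matrix: single entry `f p` in row `p`, at column `g p`. -/
def spar {n : ℕ} (f : T3 n → ℂ) (g : T3 n → T3 n) : Mat3 n :=
  fun p q => if q = g p then f p else 0

lemma spar_mul {n : ℕ} (f f' : T3 n → ℂ) (g g' : T3 n → T3 n) :
    spar f g * spar f' g' = spar (fun p => f p * f' (g p)) (fun p => g' (g p)) := by
  ext p q
  simp only [Matrix.mul_apply, spar]
  rw [Finset.sum_eq_single (g p)]
  · by_cases h : q = g' (g p) <;> simp [h]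
  · intro k _ hk; simp [hk]
  · intro h; exact absurd (Finset.mem_univ _) h

lemma pl12_Rof {n : ℕ} (α β : (Fin n → ℂ) → Fin n → Fin n → ℂ) (u : Fin n → (Fin n → ℂ)) :
    pl12 (fun c => Rof α β (u c)) =
      spar (fun p => if p.1 = p.2.1 then 1 else α (u p.2.2) p.1 p.2.1) id +
      spar (fun p => if p.1 = p.2.1 then 0 else β (u p.2.2) p.1 p.2.1) s12 := by
  ext ⟨a, b, c⟩ ⟨d, e, f⟩
  simp only [pl12, Rof, spar, Matrix.add_apply, s12, id_eq, Prod.mk.injEq, ne_eq]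
  by_cases hcf : c = f <;> by_cases had : a = d <;> by_cases hbe : b = e <;>
    by_cases hae : a = e <;> by_cases hbd : b = d <;> by_cases hab : a = b <;>
      simp_all <;> (try split_ifs) <;> grind

lemma pl13_Rof {n : ℕ} (α β : (Fin n → ℂ) → Fin n → Fin n → ℂ) (u : Fin n → (Fin n → ℂ)) :
    pl13 (fun c => Rof α β (u c)) =
      spar (fun p => if p.1 = p.2.2 then 1 else α (u p.2.1) p.1 p.2.2) id +
      spar (fun p => if p.1 = p.2.2 then 0 else β (u p.2.1) p.1 p.2.2) s13 := by
  ext ⟨a, b, c⟩ ⟨d, e, f⟩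
  simp only [pl13, Rof, spar, Matrix.add_apply, s13, id_eq, Prod.mk.injEq, ne_eq]
  by_cases hbe : b = e <;> by_cases had : a = d <;> by_cases hcf : c = f <;>
    by_cases haf : a = f <;> by_cases hcd : c = d <;> by_cases hac : a = c <;>
      simp_all <;> (try split_ifs) <;> grind

lemma pl23_Rof {n : ℕ} (α β : (Fin n → ℂ) → Fin n → Fin n → ℂ) (u : Fin n → (Fin n → ℂ)) :
    pl23 (fun c => Rof α β (u c)) =
      spar (fun p => if p.2.1 = p.2.2 then 1 else α (u p.1) p.2.1 p.2.2) id +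
      spar (fun p => if p.2.1 = p.2.2 then 0 else β (u p.1) p.2.1 p.2.2) s23 := by
  ext ⟨a, b, c⟩ ⟨d, e, f⟩
  simp only [pl23, Rof, spar, Matrix.add_apply, s23, id_eq, Prod.mk.injEq, ne_eq]
  by_cases had : a = d <;> by_cases hbe : b = e <;> by_cases hcf : c = f <;>
    by_cases hbf : b = f <;> by_cases hce : c = e <;> by_cases hbc : b = c <;>
      simp_all <;> (try split_ifs) <;> grind



section TwistAux

variable {n : ℕ}

def psi (φ : (Fin n → ℂ) → Fin n → Fin n → ℂ) (mu : Fin n → ℂ) (a b : Fin n) : ℂ :=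
  if a = b then 1 else φ mu a b

def Phi (γ : ℂ) (φ : (Fin n → ℂ) → Fin n → Fin n → ℂ) (lam : Fin n → ℂ) (p q : T3 n) : ℂ :=
  if q = p then
    psi φ (sh γ lam p.2.2) p.1 p.2.1 * psi φ lam p.1 p.2.2 * psi φ (sh γ lam p.1) p.2.1 p.2.2
  else if q = s12 p then psi φ lam p.2.1 p.2.2 * psi φ (sh γ lam p.2.1) p.1 p.2.2
  else if q = s13 p then 1
  else if q = s23 p then psi φ (sh γ lam p.2.2) p.1 p.2.1 * psi φ lam p.1 p.2.2
  else if q = rr1 p then psi φ (sh γ lam p.2.2) p.1 p.2.1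
  else if q = rr2 p then psi φ lam p.2.1 p.2.2
  else 1

/-- entrywise (Hadamard-type) scaling of a matrix -/
def Hm (Φ : T3 n → T3 n → ℂ) (M : Mat3 n) : Mat3 n := fun p q => Φ p q * M p q

lemma twistSide (d1 s1 d2 s2 d3 s3 d1' s1' d2' s2' d3' s3' : T3 n → ℂ)
    (ga gb gc : T3 n → T3 n) (Φ : T3 n → T3 n → ℂ)
    (h1 : ∀ p, d1' p * d2' p * d3' p = Φ p p * (d1 p * d2 p * d3 p))
    (h2 : ∀ p, d1' p * d2' p * s3' p = Φ p (gc p) * (d1 p * d2 p * s3 p))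
    (h3 : ∀ p, d1' p * s2' p * d3' (gb p) = Φ p (gb p) * (d1 p * s2 p * d3 (gb p)))
    (h4 : ∀ p, d1' p * s2' p * s3' (gb p) = Φ p (gc (gb p)) * (d1 p * s2 p * s3 (gb p)))
    (h5 : ∀ p, s1' p * d2' (ga p) * d3' (ga p) = Φ p (ga p) * (s1 p * d2 (ga p) * d3 (ga p)))
    (h6 : ∀ p, s1' p * d2' (ga p) * s3' (ga p) = Φ p (gc (ga p)) * (s1 p * d2 (ga p) * s3 (ga p)))
    (h7 : ∀ p, s1' p * s2' (ga p) * d3' (gb (ga p)) =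
      Φ p (gb (ga p)) * (s1 p * s2 (ga p) * d3 (gb (ga p))))
    (h8 : ∀ p, s1' p * s2' (ga p) * s3' (gb (ga p)) =
      Φ p (gc (gb (ga p))) * (s1 p * s2 (ga p) * s3 (gb (ga p)))) :
    (spar d1' id + spar s1' ga) * (spar d2' id + spar s2' gb) * (spar d3' id + spar s3' gc)
      = Hm Φ ((spar d1 id + spar s1 ga) * (spar d2 id + spar s2 gb) * (spar d3 id + spar s3 gc)) := by
  simp only [add_mul, mul_add, spar_mul, id_eq]
  ext p q
  simp only [Matrix.add_apply, Hm, spar]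
  have e1 : (if q = p then d1' p * d2' p * d3' p else 0)
      = Φ p q * (if q = p then d1 p * d2 p * d3 p else 0) := by
    split_ifs with h
    · rw [h]; exact h1 p
    · ring
  have e2 : (if q = gc p then d1' p * d2' p * s3' p else 0)
      = Φ p q * (if q = gc p then d1 p * d2 p * s3 p else 0) := by
    split_ifs with h
    · rw [h]; exact h2 p
    · ring
  have e3 : (if q = gb p then d1' p * s2' p * d3' (gb p) else 0)
      = Φ p q * (if q = gb p then d1 p * s2 p * d3 (gb p) else 0) := by
    split_ifs with h
    · rw [h]; exact h3 p
    · ring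
  have e4 : (if q = gc (gb p) then d1' p * s2' p * s3' (gb p) else 0)
      = Φ p q * (if q = gc (gb p) then d1 p * s2 p * s3 (gb p) else 0) := by
    split_ifs with h
    · rw [h]; exact h4 p
    · ring
  have e5 : (if q = ga p then s1' p * d2' (ga p) * d3' (ga p) else 0)
      = Φ p q * (if q = ga p then s1 p * d2 (ga p) * d3 (ga p) else 0) := by
    split_ifs with h
    · rw [h]; exact h5 p
    · ring
  have e6 : (if q = gc (ga p) then s1' p * d2' (ga p) * s3' (ga p) else 0)
      = Φ p q * (if q = gc (ga p) then s1 p * d2 (ga p) * s3 (ga p) else 0) := by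
    split_ifs with h
    · rw [h]; exact h6 p
    · ring
  have e7 : (if q = gb (ga p) then s1' p * s2' (ga p) * d3' (gb (ga p)) else 0)
      = Φ p q * (if q = gb (ga p) then s1 p * s2 (ga p) * d3 (gb (ga p)) else 0) := by
    split_ifs with h
    · rw [h]; exact h7 p
    · ring
  have e8 : (if q = gc (gb (ga p)) then s1' p * s2' (ga p) * s3' (gb (ga p)) else 0)
      = Φ p q * (if q = gc (gb (ga p)) then s1 p * s2 (ga p) * s3 (gb (ga p)) else 0) := by
    split_ifs with h
    · rw [h]; exact h8 p
    · ring
  linear_combination e1 + e2 + e3 + e4 + e5 + e6 + e7 + e8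

end TwistAux

section Terms

variable {n : ℕ} (γ : ℂ) (α β φ : (Fin n → ℂ) → Fin n → Fin n → ℂ) (lam : Fin n → ℂ)

lemma psiskew (hskew : ∀ mu (a b : Fin n), φ mu a b * φ mu b a = 1) (mu : Fin n → ℂ)
    (a b : Fin n) : psi φ mu a b * psi φ mu b a = 1 := by
  by_cases hab : a = b
  · simp [psi, hab]
  · rw [psi, psi, if_neg hab, if_neg (fun h => hab h.symm)]
    exact hskew mu a b

lemma psiclosed (hskew : ∀ mu (a b : Fin n), φ mu a b * φ mu b a = 1)
    (hclosed : ∀ mu (a b c : Fin n),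
      φ mu a b * φ mu b c * φ mu c a =
        φ (sh γ mu c) a b * φ (sh γ mu a) b c * φ (sh γ mu b) c a)
    (a b c : Fin n) :
    psi φ lam b c * psi φ (sh γ lam b) a c * psi φ lam a b
      = psi φ (sh γ lam c) a b * psi φ lam a c * psi φ (sh γ lam a) b c := by
  by_cases hab : a = b
  · subst hab
    by_cases hac : a = c
    · subst hac; simp [psi]
    · simp [psi, hac, Ne.symm hac]
  · by_cases hac : a = c
    · subst hac
      by_cases hbc : b = a
      · exact absurd hbc.symm hab
      · simp [psi, hab, hbc, Ne.symm hab, Ne.symm hbc]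
        linear_combination hskew lam b a - hskew (sh γ lam a) a b
    · by_cases hbc : b = c
      · subst hbc
        simp [psi, hab, hac, Ne.symm hab, Ne.symm hac]
      · simp [psi, hab, hac, hbc, Ne.symm hab, Ne.symm hac, Ne.symm hbc]
        linear_combination φ lam a c * φ (sh γ lam b) a c * hclosed lam a b c
          - (φ lam a b * φ lam b c * φ (sh γ lam b) a c) * hskew lam c a
          + (φ (sh γ lam c) a b * φ (sh γ lam a) b c * φ lam a c) * hskew (sh γ lam b) c a

lemma TL1 (a b c : Fin n) :
    (if a = b then (1:ℂ) else α (sh γ lam c) a b * φ (sh γ lam c) a b) *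
      (if a = c then 1 else α lam a c * φ lam a c) *
      (if b = c then 1 else α (sh γ lam a) b c * φ (sh γ lam a) b c)
    = Phi γ φ lam (a,b,c) (a,b,c) *
      ((if a = b then 1 else α (sh γ lam c) a b) * (if a = c then 1 else α lam a c) *
        (if b = c then 1 else α (sh γ lam a) b c)) := by
  by_cases hab : a = b <;> by_cases hac : a = c <;> by_cases hbc : b = c <;>
    simp_all [Phi, psi, s12, s13, s23, rr1, rr2, Prod.mk.injEq, eq_comm] <;> ring

lemma TL2 (a b c : Fin n) :
    (if a = b then (1:ℂ) else α (sh γ lam c) a b * φ (sh γ lam c) a b) *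
      (if a = c then 1 else α lam a c * φ lam a c) *
      (if b = c then 0 else β (sh γ lam a) b c)
    = Phi γ φ lam (a,b,c) (a,c,b) *
      ((if a = b then 1 else α (sh γ lam c) a b) * (if a = c then 1 else α lam a c) *
        (if b = c then 0 else β (sh γ lam a) b c)) := by
  by_cases hab : a = b <;> by_cases hac : a = c <;> by_cases hbc : b = c <;>
    simp_all [Phi, psi, s12, s13, s23, rr1, rr2, Prod.mk.injEq, eq_comm] <;> ring

lemma TL3 (hskew : ∀ mu (a b : Fin n), φ mu a b * φ mu b a = 1) (a b c : Fin n) :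
    (if a = b then (1:ℂ) else α (sh γ lam c) a b * φ (sh γ lam c) a b) *
      (if a = c then 0 else β lam a c) *
      (if b = a then 1 else α (sh γ lam c) b a * φ (sh γ lam c) b a)
    = Phi γ φ lam (a,b,c) (c,b,a) *
      ((if a = b then 1 else α (sh γ lam c) a b) * (if a = c then 0 else β lam a c) *
        (if b = a then 1 else α (sh γ lam c) b a)) := by
  by_cases hac : a = c
  · simp [hac]
  · by_cases hab : a = b
    · subst hab
      simp [Phi, psi, s12, s13, s23, rr1, rr2, Prod.mk.injEq, hac, Ne.symm hac]
    · by_cases hbc : b = c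
      · subst hbc
        simp [Phi, psi, s12, s13, s23, rr1, rr2, Prod.mk.injEq, hab, hac, Ne.symm hab,
          Ne.symm hac]
        linear_combination (α (sh γ lam b) a b * β lam a b * α (sh γ lam b) b a) *
          hskew (sh γ lam b) a b
      · simp [Phi, psi, s12, s13, s23, rr1, rr2, Prod.mk.injEq, hab, hac, hbc,
          Ne.symm hab, Ne.symm hac, Ne.symm hbc]
        linear_combination (α (sh γ lam c) a b * β lam a c * α (sh γ lam c) b a) *
          hskew (sh γ lam c) a b

lemma TL4 (a b c : Fin n) :
    (if a = b then (1:ℂ) else α (sh γ lam c) a b * φ (sh γ lam c) a b) *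
      (if a = c then 0 else β lam a c) *
      (if b = a then 0 else β (sh γ lam c) b a)
    = Phi γ φ lam (a,b,c) (c,a,b) *
      ((if a = b then 1 else α (sh γ lam c) a b) * (if a = c then 0 else β lam a c) *
        (if b = a then 0 else β (sh γ lam c) b a)) := by
  by_cases hab : a = b <;> by_cases hac : a = c <;> by_cases hbc : b = c <;>
    simp_all [Phi, psi, s12, s13, s23, rr1, rr2, Prod.mk.injEq, eq_comm] <;> ring

lemma TL5 (a b c : Fin n) :
    (if a = b then (0:ℂ) else β (sh γ lam c) a b) *
      (if b = c then 1 else α lam b c * φ lam b c) *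
      (if a = c then 1 else α (sh γ lam b) a c * φ (sh γ lam b) a c)
    = Phi γ φ lam (a,b,c) (b,a,c) *
      ((if a = b then 0 else β (sh γ lam c) a b) * (if b = c then 1 else α lam b c) *
        (if a = c then 1 else α (sh γ lam b) a c)) := by
  by_cases hab : a = b <;> by_cases hac : a = c <;> by_cases hbc : b = c <;>
    simp_all [Phi, psi, s12, s13, s23, rr1, rr2, Prod.mk.injEq, eq_comm] <;> ring

lemma TL6 (a b c : Fin n) :
    (if a = b then (0:ℂ) else β (sh γ lam c) a b) *
      (if b = c then 1 else α lam b c * φ lam b c) *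
      (if a = c then 0 else β (sh γ lam b) a c)
    = Phi γ φ lam (a,b,c) (b,c,a) *
      ((if a = b then 0 else β (sh γ lam c) a b) * (if b = c then 1 else α lam b c) *
        (if a = c then 0 else β (sh γ lam b) a c)) := by
  by_cases hab : a = b <;> by_cases hac : a = c <;> by_cases hbc : b = c <;>
    simp_all [Phi, psi, s12, s13, s23, rr1, rr2, Prod.mk.injEq, eq_comm] <;> ring

lemma TL7 (a b c : Fin n) :
    (if a = b then (0:ℂ) else β (sh γ lam c) a b) *
      (if b = c then 0 else β lam b c) *
      (if a = b then 1 else α (sh γ lam c) a b * φ (sh γ lam c) a b)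
    = Phi γ φ lam (a,b,c) (c,a,b) *
      ((if a = b then 0 else β (sh γ lam c) a b) * (if b = c then 0 else β lam b c) *
        (if a = b then 1 else α (sh γ lam c) a b)) := by
  by_cases hab : a = b <;> by_cases hac : a = c <;> by_cases hbc : b = c <;>
    simp_all [Phi, psi, s12, s13, s23, rr1, rr2, Prod.mk.injEq, eq_comm] <;> ring

lemma TL8 (hskew : ∀ mu (a b : Fin n), φ mu a b * φ mu b a = 1) (a b c : Fin n) :
    (if a = b then (0:ℂ) else β (sh γ lam c) a b) *
      (if b = c then 0 else β lam b c) *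
      (if a = b then 0 else β (sh γ lam c) a b)
    = Phi γ φ lam (a,b,c) (c,b,a) *
      ((if a = b then 0 else β (sh γ lam c) a b) * (if b = c then 0 else β lam b c) *
        (if a = b then 0 else β (sh γ lam c) a b)) := by
  by_cases hab : a = b <;> by_cases hac : a = c <;> by_cases hbc : b = c <;>
    simp_all [Phi, psi, s12, s13, s23, rr1, rr2, Prod.mk.injEq, eq_comm] <;>
    first
      | ring
      | linear_combination (β (sh γ lam c) a b * β lam b c * β (sh γ lam c) a b) *
          hskew (sh γ lam c) a b

lemma TR1 (hskew : ∀ mu (a b : Fin n), φ mu a b * φ mu b a = 1)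
    (hclosed : ∀ mu (a b c : Fin n),
      φ mu a b * φ mu b c * φ mu c a =
        φ (sh γ mu c) a b * φ (sh γ mu a) b c * φ (sh γ mu b) c a)
    (a b c : Fin n) :
    (if b = c then (1:ℂ) else α lam b c * φ lam b c) *
      (if a = c then 1 else α (sh γ lam b) a c * φ (sh γ lam b) a c) *
      (if a = b then 1 else α lam a b * φ lam a b)
    = Phi γ φ lam (a,b,c) (a,b,c) *
      ((if b = c then 1 else α lam b c) * (if a = c then 1 else α (sh γ lam b) a c) *
        (if a = b then 1 else α lam a b)) := by
  by_cases hab : a = b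
  · subst hab
    by_cases hac : a = c
    · subst hac; simp [Phi, psi]
    · simp [Phi, psi, s12, s13, s23, rr1, rr2, Prod.mk.injEq, hac, Ne.symm hac]; ring
  · by_cases hac : a = c
    · subst hac
      by_cases hbc : b = a
      · exact absurd hbc.symm hab
      · simp [Phi, psi, s12, s13, s23, rr1, rr2, Prod.mk.injEq, hab, hbc, Ne.symm hab,
          Ne.symm hbc]
        linear_combination (α lam b a * α lam a b) *
          (hskew lam a b - hskew (sh γ lam a) a b)
    · by_cases hbc : b = c
      · subst hbc
        simp [Phi, psi, s12, s13, s23, rr1, rr2, Prod.mk.injEq, hab, hac, Ne.symm hab,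
          Ne.symm hac]
        ring
      · have key := psiclosed γ φ lam hskew hclosed a b c
        simp [psi, hab, hac, hbc, Ne.symm hab, Ne.symm hac, Ne.symm hbc] at key
        simp [Phi, psi, s12, s13, s23, rr1, rr2, Prod.mk.injEq, hab, hac, hbc,
          Ne.symm hab, Ne.symm hac, Ne.symm hbc]
        linear_combination (α lam b c * α (sh γ lam b) a c * α lam a b) * key

lemma TR2 (a b c : Fin n) :
    (if b = c then (1:ℂ) else α lam b c * φ lam b c) *
      (if a = c then 1 else α (sh γ lam b) a c * φ (sh γ lam b) a c) *
      (if a = b then 0 else β lam a b)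
    = Phi γ φ lam (a,b,c) (b,a,c) *
      ((if b = c then 1 else α lam b c) * (if a = c then 1 else α (sh γ lam b) a c) *
        (if a = b then 0 else β lam a b)) := by
  by_cases hab : a = b <;> by_cases hac : a = c <;> by_cases hbc : b = c <;>
    simp_all [Phi, psi, s12, s13, s23, rr1, rr2, Prod.mk.injEq, eq_comm] <;> ring

lemma TR3 (hskew : ∀ mu (a b : Fin n), φ mu a b * φ mu b a = 1) (a b c : Fin n) :
    (if b = c then (1:ℂ) else α lam b c * φ lam b c) *
      (if a = c then 0 else β (sh γ lam b) a c) *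
      (if c = b then 1 else α lam c b * φ lam c b)
    = Phi γ φ lam (a,b,c) (c,b,a) *
      ((if b = c then 1 else α lam b c) * (if a = c then 0 else β (sh γ lam b) a c) *
        (if c = b then 1 else α lam c b)) := by
  by_cases hac : a = c
  · simp [hac]
  · by_cases hab : a = b
    · subst hab
      simp [Phi, psi, s12, s13, s23, rr1, rr2, Prod.mk.injEq, hac, Ne.symm hac]
      linear_combination (α lam a c * β (sh γ lam a) a c * α lam c a) * hskew lam a c
    · by_cases hbc : b = c
      · subst hbc
        simp [Phi, psi, s12, s13, s23, rr1, rr2, Prod.mk.injEq, hab, hac, Ne.symm hab,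
          Ne.symm hac]
      · simp [Phi, psi, s12, s13, s23, rr1, rr2, Prod.mk.injEq, hab, hac, hbc,
          Ne.symm hab, Ne.symm hac, Ne.symm hbc]
        linear_combination (α lam b c * β (sh γ lam b) a c * α lam c b) * hskew lam b c

lemma TR4 (a b c : Fin n) :
    (if b = c then (1:ℂ) else α lam b c * φ lam b c) *
      (if a = c then 0 else β (sh γ lam b) a c) *
      (if c = b then 0 else β lam c b)
    = Phi γ φ lam (a,b,c) (b,c,a) *
      ((if b = c then 1 else α lam b c) * (if a = c then 0 else β (sh γ lam b) a c) *
        (if c = b then 0 else β lam c b)) := by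
  by_cases hab : a = b <;> by_cases hac : a = c <;> by_cases hbc : b = c <;>
    simp_all [Phi, psi, s12, s13, s23, rr1, rr2, Prod.mk.injEq, eq_comm] <;> ring

lemma TR5 (a b c : Fin n) :
    (if b = c then (0:ℂ) else β lam b c) *
      (if a = b then 1 else α (sh γ lam c) a b * φ (sh γ lam c) a b) *
      (if a = c then 1 else α lam a c * φ lam a c)
    = Phi γ φ lam (a,b,c) (a,c,b) *
      ((if b = c then 0 else β lam b c) * (if a = b then 1 else α (sh γ lam c) a b) *
        (if a = c then 1 else α lam a c)) := by
  by_cases hab : a = b <;> by_cases hac : a = c <;> by_cases hbc : b = c <;>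
    simp_all [Phi, psi, s12, s13, s23, rr1, rr2, Prod.mk.injEq, eq_comm] <;> ring

lemma TR6 (a b c : Fin n) :
    (if b = c then (0:ℂ) else β lam b c) *
      (if a = b then 1 else α (sh γ lam c) a b * φ (sh γ lam c) a b) *
      (if a = c then 0 else β lam a c)
    = Phi γ φ lam (a,b,c) (c,a,b) *
      ((if b = c then 0 else β lam b c) * (if a = b then 1 else α (sh γ lam c) a b) *
        (if a = c then 0 else β lam a c)) := by
  by_cases hab : a = b <;> by_cases hac : a = c <;> by_cases hbc : b = c <;>
    simp_all [Phi, psi, s12, s13, s23, rr1, rr2, Prod.mk.injEq, eq_comm] <;> ring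

lemma TR7 (a b c : Fin n) :
    (if b = c then (0:ℂ) else β lam b c) *
      (if a = b then 0 else β (sh γ lam c) a b) *
      (if b = c then 1 else α lam b c * φ lam b c)
    = Phi γ φ lam (a,b,c) (b,c,a) *
      ((if b = c then 0 else β lam b c) * (if a = b then 0 else β (sh γ lam c) a b) *
        (if b = c then 1 else α lam b c)) := by
  by_cases hab : a = b <;> by_cases hac : a = c <;> by_cases hbc : b = c <;>
    simp_all [Phi, psi, s12, s13, s23, rr1, rr2, Prod.mk.injEq, eq_comm] <;> ring

lemma TR8 (hskew : ∀ mu (a b : Fin n), φ mu a b * φ mu b a = 1) (a b c : Fin n) :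
    (if b = c then (0:ℂ) else β lam b c) *
      (if a = b then 0 else β (sh γ lam c) a b) *
      (if b = c then 0 else β lam b c)
    = Phi γ φ lam (a,b,c) (c,b,a) *
      ((if b = c then 0 else β lam b c) * (if a = b then 0 else β (sh γ lam c) a b) *
        (if b = c then 0 else β lam b c)) := by
  by_cases hab : a = b <;> by_cases hac : a = c <;> by_cases hbc : b = c <;>
    simp_all [Phi, psi, s12, s13, s23, rr1, rr2, Prod.mk.injEq, eq_comm] <;>
    first
      | ring
      | linear_combination (β lam b c * β (sh γ lam c) a b * β lam b c) *
          hskew (sh γ lam c) a b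

end Terms


section Assemble

variable {n : ℕ} (γ : ℂ) (α β φ : (Fin n → ℂ) → Fin n → Fin n → ℂ) (lam : Fin n → ℂ)

lemma twistL (hskew : ∀ mu (a b : Fin n), φ mu a b * φ mu b a = 1) :
    pl12 (fun c => Rof (fun mu x y => α mu x y * φ mu x y) β (sh γ lam c)) *
        pl13 (fun _ => Rof (fun mu x y => α mu x y * φ mu x y) β lam) *
        pl23 (fun a => Rof (fun mu x y => α mu x y * φ mu x y) β (sh γ lam a))
      = Hm (Phi γ φ lam)
        (pl12 (fun c => Rof α β (sh γ lam c)) * pl13 (fun _ => Rof α β lam) *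
          pl23 (fun a => Rof α β (sh γ lam a))) := by
  rw [pl12_Rof, pl13_Rof, pl23_Rof, pl12_Rof, pl13_Rof, pl23_Rof]
  refine twistSide _ _ _ _ _ _ _ _ _ _ _ _ s12 s13 s23 (Phi γ φ lam)
    ?_ ?_ ?_ ?_ ?_ ?_ ?_ ?_
  · rintro ⟨a, b, c⟩; exact TL1 γ α φ lam a b c
  · rintro ⟨a, b, c⟩; exact TL2 γ α β φ lam a b c
  · rintro ⟨a, b, c⟩; exact TL3 γ α β φ lam hskew a b c
  · rintro ⟨a, b, c⟩; exact TL4 γ α β φ lam a b c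
  · rintro ⟨a, b, c⟩; exact TL5 γ α β φ lam a b c
  · rintro ⟨a, b, c⟩; exact TL6 γ α β φ lam a b c
  · rintro ⟨a, b, c⟩; exact TL7 γ α β φ lam a b c
  · rintro ⟨a, b, c⟩; exact TL8 γ β φ lam hskew a b c

lemma twistR (hskew : ∀ mu (a b : Fin n), φ mu a b * φ mu b a = 1)
    (hclosed : ∀ mu (a b c : Fin n),
      φ mu a b * φ mu b c * φ mu c a =
        φ (sh γ mu c) a b * φ (sh γ mu a) b c * φ (sh γ mu b) c a) :
    pl23 (fun _ => Rof (fun mu x y => α mu x y * φ mu x y) β lam) *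
        pl13 (fun b => Rof (fun mu x y => α mu x y * φ mu x y) β (sh γ lam b)) *
        pl12 (fun _ => Rof (fun mu x y => α mu x y * φ mu x y) β lam)
      = Hm (Phi γ φ lam)
        (pl23 (fun _ => Rof α β lam) * pl13 (fun b => Rof α β (sh γ lam b)) *
          pl12 (fun _ => Rof α β lam)) := by
  rw [pl23_Rof, pl13_Rof, pl12_Rof, pl23_Rof, pl13_Rof, pl12_Rof]
  refine twistSide _ _ _ _ _ _ _ _ _ _ _ _ s23 s13 s12 (Phi γ φ lam)
    ?_ ?_ ?_ ?_ ?_ ?_ ?_ ?_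
  · rintro ⟨a, b, c⟩; exact TR1 γ α φ lam hskew hclosed a b c
  · rintro ⟨a, b, c⟩; exact TR2 γ α β φ lam a b c
  · rintro ⟨a, b, c⟩; exact TR3 γ α β φ lam hskew a b c
  · rintro ⟨a, b, c⟩; exact TR4 γ α β φ lam a b c
  · rintro ⟨a, b, c⟩; exact TR5 γ α β φ lam a b c
  · rintro ⟨a, b, c⟩; exact TR6 γ α β φ lam a b c
  · rintro ⟨a, b, c⟩; exact TR7 γ α β φ lam a b c
  · rintro ⟨a, b, c⟩; exact TR8 γ β φ lam hskew a b c

end Assemble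


/-- Twisting by a closed multiplicative 2-form `φ` preserves QDYBE with step γ. -/
theorem twist_by_closed_form_preserves_QDYBE {n : ℕ} (γ : ℂ)
    (α β φ : (Fin n → ℂ) → Fin n → Fin n → ℂ)
    (hR : ∀ lam, QDYBEat γ (Rof α β) lam)
    (hskew : ∀ lam a b, φ lam a b * φ lam b a = 1)
    (hclosed : ∀ lam (a b c : Fin n),
      φ lam a b * φ lam b c * φ lam c a =
        φ (sh γ lam c) a b * φ (sh γ lam a) b c * φ (sh γ lam b) c a) :
    ∀ lam, QDYBEat γ (Rof (fun lam a b => α lam a b * φ lam a b) β) lam := by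
  intro lam
  have hL := twistL γ α β φ lam hskew
  have hRR := twistR γ α β φ lam hskew hclosed
  have h0 := hR lam
  unfold QDYBEat at h0 ⊢
  rw [hL, hRR, h0]

end Stmt6
end

section
/- Let 𝔤 = 𝔰𝔩₂(ℂ) with e, f, h, and let V, W be 𝔤-modules with weight decompositions on which the series below act (e.g. V finite-dimensional and W a Verma module, or both finite-dimensional). Define J(λ) = Σ_{n≥0} ((−1)ⁿ/n!) fⁿ ⊗ (λ−h+n+1)^{-1}(λ−h+n+2)^{-1}⋯(λ−h+2n)^{-1} eⁿ, acting on W⊗V (the series terminates on finite-dimensional V since e is nilpotent). Then J(λ) satisfies the classical ABRR equation [J(λ), 1⊗Θ(λ)] = (f⊗e)·J(λ), where Θ(λ) = λ·(h/2) + (h/2) − (1/2)(h/2)², interpreted as follows: on a vector of 𝔥-weight m (i.e. h acts by m), Θ(λ) acts by the scalar λm/2 + m/2 − m²/8. -/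
/-!
STATEMENT 12: for 𝔤 = 𝔰𝔩₂, the operator
`J(λ) = Σ_{n≥0} ((-1)ⁿ/n!) fⁿ ⊗ (λ-h+n+1)⁻¹⋯(λ-h+2n)⁻¹ eⁿ`
on `W ⊗ V` satisfies the classical ABRR equation
`[J(λ), 1⊗Θ(λ)] = (f⊗e)·J(λ)`.

Here `Θ(λ) = λ̄ + ρ̄ - (1/2)Σᵢxᵢ²` acts on a weight-m vector of V by the
scalar `λm/2 + m/2 - m²/4` (for 𝔰𝔩₂ the orthonormal basis of 𝔥 with respect to
the invariant form with (α,α) = 2 is `x = h/√2`, so `(1/2)x² = h²/4`), i.e.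
`Θ(λ) = (λ/2)·h + (1/2)·h - (1/4)·h²`.  The factors `(λ-h+j)⁻¹` act on the
second tensor factor after `eⁿ`; they are encoded via `Ring.inverse`, and λ is
generic so that each `λ - h + j` (j ≥ 1) is invertible.  The series terminates:
`e` is nilpotent on the finite dimensional module V (`e^N = 0`).
-/

namespace Stmt12

open scoped TensorProduct

variable (W V : Type*) [AddCommGroup W] [Module ℂ W] [AddCommGroup V] [Module ℂ V]

/-- The universal fusion operator of 𝔰𝔩₂ evaluated on `W ⊗ V` (the series
truncated at the nilpotency order `N` of `e` on `V`). -/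
noncomputable def J (fW : Module.End ℂ W) (eV hV : Module.End ℂ V) (lam : ℂ) (N : ℕ) :
    Module.End ℂ (W ⊗[ℂ] V) :=
  ∑ n ∈ Finset.range (N + 1),
    (((-1 : ℂ) ^ n / n.factorial) •
      TensorProduct.map (fW ^ n)
        ((((List.range n).map (fun k =>
            Ring.inverse (lam • (1 : Module.End ℂ V) - hV +
              (((n + k + 1 : ℕ) : ℂ) • 1)))).prod) * eV ^ n))

/-- `Θ(λ) = λ̄ + ρ̄ - (1/2)Σᵢxᵢ² = (λ/2)h + (1/2)h - (1/4)h²` on V. -/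
noncomputable def Θ (hV : Module.End ℂ V) (lam : ℂ) : Module.End ℂ V :=
  (lam / 2) • hV + (1 / 2 : ℂ) • hV - (1 / 4 : ℂ) • (hV * hV)


section AuxRing
variable {R : Type*} [Ring R]

lemma commute_ringInverse {a b : R} (h : Commute a b) (hb : IsUnit b) :
    Commute a (Ring.inverse b) := by
  unfold Commute SemiconjBy
  calc a * Ring.inverse b
      = Ring.inverse b * (b * a) * Ring.inverse b := by
        rw [← mul_assoc, Ring.inverse_mul_cancel _ hb, one_mul]
    _ = Ring.inverse b * (a * b) * Ring.inverse b := by rw [← h.eq]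
    _ = Ring.inverse b * a := by
        simp [mul_assoc, Ring.mul_inverse_cancel _ hb]

end AuxRing

noncomputable def A (hV : Module.End ℂ V) (lam : ℂ) (j : ℕ) : Module.End ℂ V :=
  lam • (1 : Module.End ℂ V) - hV + ((j : ℂ) • 1)

section AuxLemmas
variable {W V}
variable (hV eV : Module.End ℂ V) (lam : ℂ)

lemma A_comm (j k : ℕ) : Commute (A V hV lam j) (A V hV lam k) := by
  have h : A V hV lam j = A V hV lam k + (((j : ℂ) - k) • 1) := by
    unfold A; module
  rw [h]
  exact (Commute.refl _).add_left ((Commute.one_left _).smul_left _)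

lemma Θ_comm_A (j : ℕ) :
    Commute ((lam / 2) • hV + (1 / 2 : ℂ) • hV - (1 / 4 : ℂ) • (hV * hV)) (A V hV lam j) := by
  have hh : Commute ((lam / 2) • hV + (1 / 2 : ℂ) • hV - (1 / 4 : ℂ) • (hV * hV)) hV :=
    (((Commute.refl hV).smul_left _).add_left ((Commute.refl hV).smul_left _)).sub_left
      (((Commute.refl hV).mul_left (Commute.refl hV)).smul_left _)
  unfold A
  exact (((Commute.one_right _).smul_right _).sub_right hh).add_right ((Commute.one_right _).smul_right _)

lemma e_mul_h (hVrel1 : hV * eV - eV * hV = 2 • eV) :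
    eV * hV = hV * eV - (2 : ℂ) • eV := by
  have h2 : (2 : ℕ) • eV = (2 : ℂ) • eV := by
    rw [← Nat.cast_smul_eq_nsmul ℂ]; norm_num
  have h1 : eV * hV = hV * eV - (2 : ℕ) • eV := by
    rw [← hVrel1]; abel
  rw [h1, h2]

lemma e_mul_A (hVrel1 : hV * eV - eV * hV = 2 • eV) (j : ℕ) :
    eV * A V hV lam j = A V hV lam (j + 2) * eV := by
  unfold A
  simp only [mul_sub, mul_add, sub_mul, add_mul, mul_smul_comm, smul_mul_assoc,
    mul_one, one_mul, e_mul_h hV eV hVrel1]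
  push_cast
  module

lemma e_mul_invA (hVrel1 : hV * eV - eV * hV = 2 • eV)
    (hgen : ∀ j : ℕ, 1 ≤ j → IsUnit (lam • (1 : Module.End ℂ V) - hV + ((j : ℂ) • 1)))
    (j : ℕ) (hj : 1 ≤ j) :
    eV * Ring.inverse (A V hV lam j) = Ring.inverse (A V hV lam (j + 2)) * eV := by
  have u1 : IsUnit (A V hV lam j) := hgen j hj
  have u2 : IsUnit (A V hV lam (j + 2)) := hgen (j + 2) (by omega)
  have key : A V hV lam (j + 2) * (eV * Ring.inverse (A V hV lam j)) =
      A V hV lam (j + 2) * (Ring.inverse (A V hV lam (j + 2)) * eV) := by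
    rw [← mul_assoc, ← e_mul_A hV eV lam hVrel1, mul_assoc,
      Ring.mul_inverse_cancel _ u1, mul_one, ← mul_assoc,
      Ring.mul_inverse_cancel _ u2, one_mul]
  have := congrArg (fun x => Ring.inverse (A V hV lam (j + 2)) * x) key
  simpa [← mul_assoc, Ring.inverse_mul_cancel _ u2] using this

lemma e_mul_prod (hVrel1 : hV * eV - eV * hV = 2 • eV)
    (hgen : ∀ j : ℕ, 1 ≤ j → IsUnit (lam • (1 : Module.End ℂ V) - hV + ((j : ℂ) • 1)))
    (g : ℕ → ℕ) (l : List ℕ) (hl : ∀ k ∈ l, 1 ≤ g k) :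
    eV * (l.map (fun k => Ring.inverse (A V hV lam (g k)))).prod
      = (l.map (fun k => Ring.inverse (A V hV lam (g k + 2)))).prod * eV := by
  induction l with
  | nil => simp
  | cons j l ih =>
    simp only [List.map_cons, List.prod_cons]
    rw [← mul_assoc, e_mul_invA hV eV lam hVrel1 hgen _ (hl j (List.mem_cons_self)),
      mul_assoc, ih (fun k hk => hl k (List.mem_cons_of_mem _ hk)), ← mul_assoc]

lemma comm_prod (x : Module.End ℂ V)
    (hgen : ∀ j : ℕ, 1 ≤ j → IsUnit (lam • (1 : Module.End ℂ V) - hV + ((j : ℂ) • 1)))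
    (g : ℕ → ℕ) (l : List ℕ) (hl : ∀ k ∈ l, 1 ≤ g k)
    (hx : ∀ j : ℕ, Commute x (A V hV lam j)) :
    Commute x (l.map (fun k => Ring.inverse (A V hV lam (g k)))).prod := by
  induction l with
  | nil => simpa using Commute.one_right x
  | cons j l ih =>
    simp only [List.map_cons, List.prod_cons]
    exact (commute_ringInverse (hx (g j)) (hgen _ (hl j (List.mem_cons_self)))).mul_right
      (ih (fun k hk => hl k (List.mem_cons_of_mem _ hk)))

lemma e_Θ (hVrel1 : hV * eV - eV * hV = 2 • eV) :
    eV * Θ V hV lam = Θ V hV lam * eV - A V hV lam 2 * eV := by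
  have heh := e_mul_h hV eV hVrel1
  have hehh : eV * (hV * hV) = hV * (hV * eV) - (4 : ℂ) • (hV * eV) + (4 : ℂ) • eV := by
    calc eV * (hV * hV) = (eV * hV) * hV := (mul_assoc _ _ _).symm
      _ = (hV * eV - (2 : ℂ) • eV) * hV := by rw [heh]
      _ = hV * (eV * hV) - (2 : ℂ) • (eV * hV) := by
          rw [sub_mul, smul_mul_assoc, mul_assoc]
      _ = _ := by rw [heh, mul_sub, mul_smul_comm]; module
  unfold Θ A
  simp only [mul_sub, mul_add, sub_mul, add_mul, mul_smul_comm, smul_mul_assoc,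
    mul_one, one_mul, mul_assoc, heh, hehh]
  push_cast
  module

lemma pow_Θ (hVrel1 : hV * eV - eV * hV = 2 • eV) (n : ℕ) :
    eV ^ n * Θ V hV lam = Θ V hV lam * eV ^ n
      - (n : ℂ) • (A V hV lam (n + 1) * eV ^ n) := by
  induction n with
  | zero => simp
  | succ n ih =>
    have key : ((n : ℂ) + 1) • A V hV lam (n + 2) =
        A V hV lam 2 + (n : ℂ) • A V hV lam (n + 3) := by
      unfold A; push_cast; module
    calc eV ^ (n + 1) * Θ V hV lam = eV * (eV ^ n * Θ V hV lam) := by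
          rw [pow_succ', mul_assoc]
      _ = (eV * Θ V hV lam) * eV ^ n - (n : ℂ) • ((eV * A V hV lam (n + 1)) * eV ^ n) := by
          rw [ih, mul_sub, mul_smul_comm, ← mul_assoc, ← mul_assoc]
      _ = (Θ V hV lam * eV - A V hV lam 2 * eV) * eV ^ n
            - (n : ℂ) • ((A V hV lam (n + 3) * eV) * eV ^ n) := by
          rw [e_Θ hV eV lam hVrel1, e_mul_A hV eV lam hVrel1]
      _ = Θ V hV lam * eV ^ (n + 1)
            - (A V hV lam 2 * eV ^ (n + 1) + (n : ℂ) • (A V hV lam (n + 3) * eV ^ (n + 1))) := by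
          simp only [sub_mul, mul_assoc, ← pow_succ', smul_mul_assoc]; module
      _ = _ := by
          have key2 : (((n:ℕ) + 1 : ℕ) : ℂ) • (A V hV lam (n + 2) * eV ^ (n + 1)) =
              A V hV lam 2 * eV ^ (n + 1) + (n : ℂ) • (A V hV lam (n + 3) * eV ^ (n + 1)) := by
            push_cast
            rw [← smul_mul_assoc ((n:ℂ)+1), key, add_mul, smul_mul_assoc]
          rw [key2]

lemma T_Θ (hVrel1 : hV * eV - eV * hV = 2 • eV)
    (hgen : ∀ j : ℕ, 1 ≤ j → IsUnit (lam • (1 : Module.End ℂ V) - hV + ((j : ℂ) • 1)))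
    (n : ℕ) :
    (((List.range n).map (fun k => Ring.inverse (A V hV lam (n + k + 1)))).prod * eV ^ n)
        * Θ V hV lam
      - Θ V hV lam *
        (((List.range n).map (fun k => Ring.inverse (A V hV lam (n + k + 1)))).prod * eV ^ n)
      = (-(n : ℂ)) •
        (((List.range n).map (fun k => Ring.inverse (A V hV lam (n + k + 1)))).prod *
          (A V hV lam (n + 1) * eV ^ n)) := by
  have cΘ : Commute (Θ V hV lam)
      (((List.range n).map (fun k => Ring.inverse (A V hV lam (n + k + 1)))).prod) :=
    comm_prod hV lam _ hgen (fun k => n + k + 1) _ (fun k _ => Nat.le_add_left 1 _)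
      (fun j => Θ_comm_A hV lam j)
  rw [mul_assoc, pow_Θ hV eV lam hVrel1, mul_sub, ← mul_assoc, ← cΘ.eq, mul_assoc,
    mul_smul_comm]
  module

lemma e_T (hVrel1 : hV * eV - eV * hV = 2 • eV)
    (hgen : ∀ j : ℕ, 1 ≤ j → IsUnit (lam • (1 : Module.End ℂ V) - hV + ((j : ℂ) • 1)))
    (n : ℕ) :
    eV * (((List.range n).map (fun k => Ring.inverse (A V hV lam (n + k + 1)))).prod * eV ^ n)
      = ((List.range n).map (fun k => Ring.inverse (A V hV lam (n + k + 3)))).prod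
          * eV ^ (n + 1) := by
  have hshift := e_mul_prod hV eV lam hVrel1 hgen (fun k => n + k + 1) (List.range n)
    (fun k _ => Nat.le_add_left 1 _)
  have hfun : (fun k => Ring.inverse (A V hV lam (n + k + 1 + 2)))
      = fun k => Ring.inverse (A V hV lam (n + k + 3)) := rfl
  rw [← mul_assoc, hshift, hfun, mul_assoc, ← pow_succ']

lemma P_succ (hgen : ∀ j : ℕ, 1 ≤ j → IsUnit (lam • (1 : Module.End ℂ V) - hV + ((j : ℂ) • 1)))
    (n : ℕ) :
    ((List.range (n + 1)).map (fun k => Ring.inverse (A V hV lam (n + 1 + k + 1)))).prod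
        * A V hV lam (n + 2)
      = ((List.range n).map (fun k => Ring.inverse (A V hV lam (n + k + 3)))).prod := by
  have u : IsUnit (A V hV lam (n + 2)) := hgen (n + 2) (by omega)
  have cA : Commute (A V hV lam (n + 2))
      (((List.range n).map (fun k => Ring.inverse (A V hV lam (n + k + 3)))).prod) :=
    comm_prod hV lam _ hgen (fun k => n + k + 3) _ (fun k _ => Nat.le_add_left 1 _)
      (fun j => A_comm hV lam _ j)
  have hfun : ((fun k => Ring.inverse (A V hV lam (n + 1 + k + 1))) ∘ Nat.succ)
      = fun k => Ring.inverse (A V hV lam (n + k + 3)) := by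
    funext k; simp only [Function.comp]; congr 2; omega
  rw [List.range_succ_eq_map, List.map_cons, List.prod_cons, List.map_map, hfun,
    show n + 1 + 0 + 1 = n + 2 from by omega, mul_assoc, ← cA.eq, ← mul_assoc,
    Ring.inverse_mul_cancel _ u, one_mul]

lemma map_sub_right' (f : Module.End ℂ W) (g g' : Module.End ℂ V) :
    TensorProduct.map f (g - g') = TensorProduct.map f g - TensorProduct.map f g' := by
  apply TensorProduct.ext'
  intro w v
  simp [TensorProduct.tmul_sub]

lemma map_zero_right' (f : Module.End ℂ W) :
    TensorProduct.map f (0 : Module.End ℂ V) = 0 := by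
  apply TensorProduct.ext'
  intro w v
  simp

lemma c_succ (n : ℕ) :
    ((-1 : ℂ) ^ (n + 1) / (n + 1).factorial) * (-(((n + 1 : ℕ)) : ℂ))
      = (-1 : ℂ) ^ n / n.factorial := by
  have h1 : ((n.factorial : ℂ)) ≠ 0 := Nat.cast_ne_zero.2 n.factorial_ne_zero
  have h2 : (((n : ℂ)) + 1) ≠ 0 := by
    have := Nat.cast_add_one_ne_zero (R := ℂ) n
    simpa using this
  rw [Nat.factorial_succ]
  push_cast
  field_simp
  ring

end AuxLemmas

/-- The classical ABRR equation for the fusion operator of 𝔰𝔩₂. -/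
theorem classical_ABRR [FiniteDimensional ℂ V]
    (eW fW hW : Module.End ℂ W) (eV fV hV : Module.End ℂ V)
    (hWrel1 : hW * eW - eW * hW = 2 • eW) (hWrel2 : hW * fW - fW * hW = (-2 : ℤ) • fW)
    (hWrel3 : eW * fW - fW * eW = hW)
    (hVrel1 : hV * eV - eV * hV = 2 • eV) (hVrel2 : hV * fV - fV * hV = (-2 : ℤ) • fV)
    (hVrel3 : eV * fV - fV * eV = hV)
    (N : ℕ) (hNil : eV ^ N = 0)
    (lam : ℂ)
    (hgen : ∀ j : ℕ, 1 ≤ j →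
      IsUnit (lam • (1 : Module.End ℂ V) - hV + ((j : ℂ) • 1))) :
    J W V fW eV hV lam N * LinearMap.lTensor W (Θ V hV lam) -
        LinearMap.lTensor W (Θ V hV lam) * J W V fW eV hV lam N =
      TensorProduct.map fW eV * J W V fW eV hV lam N := by
  have hJ : J W V fW eV hV lam N = ∑ n ∈ Finset.range (N + 1),
      (((-1 : ℂ) ^ n / n.factorial) •
        TensorProduct.map (fW ^ n)
          ((((List.range n).map (fun k => Ring.inverse (A V hV lam (n + k + 1)))).prod)
            * eV ^ n)) := rfl
  rw [hJ, Finset.sum_mul, Finset.mul_sum, Finset.mul_sum, ← Finset.sum_sub_distrib]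
  have hL : ∀ n : ℕ,
      (((-1 : ℂ) ^ n / n.factorial) •
        TensorProduct.map (fW ^ n)
          ((((List.range n).map (fun k => Ring.inverse (A V hV lam (n + k + 1)))).prod)
            * eV ^ n)) * LinearMap.lTensor W (Θ V hV lam)
      - LinearMap.lTensor W (Θ V hV lam) *
        (((-1 : ℂ) ^ n / n.factorial) •
          TensorProduct.map (fW ^ n)
            ((((List.range n).map (fun k => Ring.inverse (A V hV lam (n + k + 1)))).prod)
              * eV ^ n))
      = (((-1 : ℂ) ^ n / n.factorial) * (-(n : ℂ))) •
          TensorProduct.map (fW ^ n)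
            ((((List.range n).map (fun k => Ring.inverse (A V hV lam (n + k + 1)))).prod)
              * (A V hV lam (n + 1) * eV ^ n)) := by
    intro n
    have hcomm := T_Θ hV eV lam hVrel1 hgen n
    have hmap : TensorProduct.map (fW ^ n)
        ((((List.range n).map (fun k => Ring.inverse (A V hV lam (n + k + 1)))).prod * eV ^ n)
            * Θ V hV lam
          - Θ V hV lam *
            (((List.range n).map (fun k => Ring.inverse (A V hV lam (n + k + 1)))).prod * eV ^ n))
        = TensorProduct.map (fW ^ n)
            ((((List.range n).map (fun k => Ring.inverse (A V hV lam (n + k + 1)))).prod * eV ^ n))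
            * LinearMap.lTensor W (Θ V hV lam)
          - LinearMap.lTensor W (Θ V hV lam) *
            TensorProduct.map (fW ^ n)
              ((((List.range n).map (fun k => Ring.inverse (A V hV lam (n + k + 1)))).prod
                * eV ^ n)) := by
      rw [map_sub_right',
        Module.End.mul_eq_comp (TensorProduct.map (fW ^ n) _) (LinearMap.lTensor W (Θ V hV lam)),
        Module.End.mul_eq_comp (LinearMap.lTensor W (Θ V hV lam)) (TensorProduct.map (fW ^ n) _),
        LinearMap.map_comp_lTensor, LinearMap.lTensor_comp_map,
        Module.End.mul_eq_comp _ (Θ V hV lam), Module.End.mul_eq_comp (Θ V hV lam)]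
    rw [mul_smul, ← TensorProduct.map_smul_right (-(n : ℂ)) (fW ^ n), ← hcomm, hmap, smul_sub,
      smul_mul_assoc, mul_smul_comm]
  have hR : ∀ n : ℕ,
      TensorProduct.map fW eV *
        (((-1 : ℂ) ^ n / n.factorial) •
          TensorProduct.map (fW ^ n)
            ((((List.range n).map (fun k => Ring.inverse (A V hV lam (n + k + 1)))).prod)
              * eV ^ n))
      = ((-1 : ℂ) ^ n / n.factorial) •
          TensorProduct.map (fW ^ (n + 1))
            ((((List.range n).map (fun k => Ring.inverse (A V hV lam (n + k + 3)))).prod)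
              * eV ^ (n + 1)) := by
    intro n
    rw [mul_smul_comm, ← TensorProduct.map_mul, e_T hV eV lam hVrel1 hgen n, ← pow_succ']
  simp only [hL, hR]
  rw [Finset.sum_range_succ' _ N, Finset.sum_range_succ]
  have ht0 : (((-1 : ℂ) ^ 0 / (Nat.factorial 0 : ℂ)) * (-((0 : ℕ) : ℂ))) •
      TensorProduct.map (fW ^ 0)
        ((((List.range 0).map (fun k => Ring.inverse (A V hV lam (0 + k + 1)))).prod)
          * (A V hV lam (0 + 1) * eV ^ 0)) = 0 := by
    simp
  have hsN : ((-1 : ℂ) ^ N / N.factorial) •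
      TensorProduct.map (fW ^ (N + 1))
        ((((List.range N).map (fun k => Ring.inverse (A V hV lam (N + k + 3)))).prod)
          * eV ^ (N + 1)) = 0 := by
    have hz : eV ^ (N + 1) = 0 := by rw [pow_succ, hNil, zero_mul]
    rw [hz, mul_zero, map_zero_right', smul_zero]
  rw [ht0, hsN, add_zero, add_zero]
  refine Finset.sum_congr rfl fun n _ => ?_
  rw [show A V hV lam (n + 1 + 1) = A V hV lam (n + 2) from rfl,
    ← mul_assoc (((List.range (n + 1)).map
      (fun k => Ring.inverse (A V hV lam (n + 1 + k + 1)))).prod),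
    P_succ hV lam hgen n, c_succ n]

end Stmt12
end

section
/- Let R be a quantum dynamical R-matrix (step γ) on V⊗V over an abelian Lie algebra 𝔥, and let (W, L_W), (U, L_U) be representations of R, i.e. invertible meromorphic L_W: 𝔥* → End_𝔥(V⊗W) satisfying R¹²(λ−γh³)L_W¹³(λ)L_W²³(λ−γh¹) = L_W²³(λ)L_W¹³(λ−γh²)R¹²(λ) on V⊗V⊗W, and similarly for L_U. Define L_{W⊗U}(λ) := L_W¹²(λ−γh³)·L_U¹³(λ) on V⊗W⊗U. Then (W⊗U, L_{W⊗U}) is again a representation of R, i.e. L_{W⊗U} satisfies the same relation on V⊗V⊗(W⊗U). -/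
/-!
STATEMENT 15: the tensor product of two representations of a quantum dynamical
R-matrix is again a representation:
`L_{W⊗U}(λ) = L_W¹²(λ-γh³) · L_U¹³(λ)` satisfies the defining relation on
`V ⊗ V ⊗ (W ⊗ U)`.

Encoding: 𝔥* ≅ ℂᵈ; V, W, U are finite dimensional semisimple 𝔥-modules with
weight bases indexed by ι, κ, υ and weights `wtV, wtW, wtU`; operators are
matrices over products of index types, with the usual leg-placement and
dynamical-shift conventions.
-/

namespace Stmt15

abbrev H (d : ℕ) := Fin d → ℂ

def pl12 {α β γ' : Type*} [DecidableEq γ']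
    (A : γ' → Matrix (α × β) (α × β) ℂ) : Matrix (α × β × γ') (α × β × γ') ℂ :=
  fun p q => if p.2.2 = q.2.2 then A q.2.2 (p.1, p.2.1) (q.1, q.2.1) else 0

def pl13 {α β γ' : Type*} [DecidableEq β]
    (A : β → Matrix (α × γ') (α × γ') ℂ) : Matrix (α × β × γ') (α × β × γ') ℂ :=
  fun p q => if p.2.1 = q.2.1 then A q.2.1 (p.1, p.2.2) (q.1, q.2.2) else 0

def pl23 {α β γ' : Type*} [DecidableEq α]
    (A : α → Matrix (β × γ') (β × γ') ℂ) : Matrix (α × β × γ') (α × β × γ') ℂ :=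
  fun p q => if p.1 = q.1 then A q.1 (p.2.1, p.2.2) (q.2.1, q.2.2) else 0

variable {d : ℕ} {ι κ υ : Type*}
  [Fintype ι] [DecidableEq ι] [Fintype κ] [DecidableEq κ] [Fintype υ] [DecidableEq υ]

/-- `(W, L)` is a representation of the dynamical R-matrix `R` (step γ):
`R¹²(λ-γh³) L¹³(λ) L²³(λ-γh¹) = L²³(λ) L¹³(λ-γh²) R¹²(λ)` on V ⊗ V ⊗ W. -/
def RepRel (γ : ℂ) (wtV : ι → H d) (wtW : κ → H d)
    (R : H d → Matrix (ι × ι) (ι × ι) ℂ) (L : H d → Matrix (ι × κ) (ι × κ) ℂ) : Prop :=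
  ∀ lam : H d,
    pl12 (fun c => R (lam - γ • wtW c)) * pl13 (fun _ => L lam) *
        pl23 (fun a => L (lam - γ • wtV a)) =
      pl23 (fun _ => L lam) * pl13 (fun b => L (lam - γ • wtV b)) *
        pl12 (fun _ => R lam)

/-- Zero-weight (𝔥-invariance) condition for an operator on V ⊗ W. -/
def ZeroWeight (wtV : ι → H d) (wtW : κ → H d)
    (L : H d → Matrix (ι × κ) (ι × κ) ℂ) : Prop :=
  ∀ lam p q, wtV p.1 + wtW p.2 ≠ wtV q.1 + wtW q.2 → L lam p q = 0

/-- The tensor product representation: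
`L_{W⊗U}(λ) = L_W¹²(λ-γh³) · L_U¹³(λ)` on V ⊗ (W ⊗ U). -/
noncomputable def Ltens (γ : ℂ) (wtU : υ → H d)
    (LW : H d → Matrix (ι × κ) (ι × κ) ℂ) (LU : H d → Matrix (ι × υ) (ι × υ) ℂ)
    (lam : H d) : Matrix (ι × κ × υ) (ι × κ × υ) ℂ :=
  pl12 (fun u => LW (lam - γ • wtU u)) * pl13 (fun _ => LU lam)


section Aux

set_option linter.unusedSectionVars false

/-! ### Multiplicativity of the leg placements -/

theorem pl12_mul {α β γ'' : Type*} [Fintype α] [Fintype β] [Fintype γ''] [DecidableEq γ'']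
    (A B : γ'' → Matrix (α × β) (α × β) ℂ) :
    pl12 (fun c => A c * B c) = pl12 A * pl12 B := by
  funext ⟨a,b,c⟩ ⟨a',b',c'⟩
  simp only [pl12, Matrix.mul_apply, Fintype.sum_prod_type, ite_mul, mul_ite, zero_mul, mul_zero]
  by_cases h : c = c'
  · subst h; simp [Finset.sum_comm (γ := γ'')]
  · simp [h]

theorem pl13_mul {α β γ'' : Type*} [Fintype α] [Fintype β] [DecidableEq β] [Fintype γ'']
    (A B : β → Matrix (α × γ'') (α × γ'') ℂ) :
    pl13 (fun c => A c * B c) = pl13 A * pl13 B := by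
  funext ⟨a,b,c⟩ ⟨a',b',c'⟩
  simp only [pl13, Matrix.mul_apply, Fintype.sum_prod_type, ite_mul, mul_ite, zero_mul, mul_zero]
  by_cases h : b = b'
  · subst h; simp [Finset.sum_comm (γ := β)]
  · simp [h]

theorem pl23_mul {α β γ'' : Type*} [Fintype α] [DecidableEq α] [Fintype β] [Fintype γ'']
    (A B : α → Matrix (β × γ'') (β × γ'') ℂ) :
    pl23 (fun c => A c * B c) = pl23 A * pl23 B := by
  funext ⟨a,b,c⟩ ⟨a',b',c'⟩
  simp only [pl23, Matrix.mul_apply, Fintype.sum_prod_type, ite_mul, mul_ite, zero_mul, mul_zero]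
  by_cases h : a = a'
  · subst h; simp
  · simp [h]

/-! ### Four-leg placement operators on `V ⊗ V ⊗ (W ⊗ U)` -/

/-- operator on legs 1,3 of `ι × ι × (κ × υ)`, depending on legs 2,4. -/
def E13 (C : ι → υ → Matrix (ι × κ) (ι × κ) ℂ) :
    Matrix (ι × ι × κ × υ) (ι × ι × κ × υ) ℂ :=
  fun p q => if p.2.1 = q.2.1 ∧ p.2.2.2 = q.2.2.2 then
    C q.2.1 q.2.2.2 (p.1, p.2.2.1) (q.1, q.2.2.1) else 0

/-- operator on legs 1,4, depending on legs 2,3. -/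
def E14 (C : ι → κ → Matrix (ι × υ) (ι × υ) ℂ) :
    Matrix (ι × ι × κ × υ) (ι × ι × κ × υ) ℂ :=
  fun p q => if p.2.1 = q.2.1 ∧ p.2.2.1 = q.2.2.1 then
    C q.2.1 q.2.2.1 (p.1, p.2.2.2) (q.1, q.2.2.2) else 0

/-- operator on legs 2,3, depending on legs 1,4. -/
def E23 (C : ι → υ → Matrix (ι × κ) (ι × κ) ℂ) :
    Matrix (ι × ι × κ × υ) (ι × ι × κ × υ) ℂ :=
  fun p q => if p.1 = q.1 ∧ p.2.2.2 = q.2.2.2 then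
    C q.1 q.2.2.2 (p.2.1, p.2.2.1) (q.2.1, q.2.2.1) else 0

/-- operator on legs 2,4, depending on legs 1,3. -/
def E24 (C : ι → κ → Matrix (ι × υ) (ι × υ) ℂ) :
    Matrix (ι × ι × κ × υ) (ι × ι × κ × υ) ℂ :=
  fun p q => if p.1 = q.1 ∧ p.2.2.1 = q.2.2.1 then
    C q.1 q.2.2.1 (p.2.1, p.2.2.2) (q.2.1, q.2.2.2) else 0

theorem E13_eq (C : ι → υ → Matrix (ι × κ) (ι × κ) ℂ) :
    pl13 (fun b => pl12 (fun u => C b u)) = E13 C := by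
  funext ⟨a,b,c,u⟩ ⟨a',b',c',u'⟩
  simp only [pl13, pl12, E13]
  by_cases h : b = b' <;> by_cases h' : u = u' <;> simp [h, h']

theorem E14_eq (C : ι → κ → Matrix (ι × υ) (ι × υ) ℂ) :
    pl13 (fun b => pl13 (fun w => C b w)) = E14 C := by
  funext ⟨a,b,c,u⟩ ⟨a',b',c',u'⟩
  simp only [pl13, E14]
  by_cases h : b = b' <;> by_cases h' : c = c' <;> simp [h, h']

theorem E23_eq (C : ι → υ → Matrix (ι × κ) (ι × κ) ℂ) :
    pl23 (fun a => pl12 (fun u => C a u)) = E23 C := by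
  funext ⟨a,b,c,u⟩ ⟨a',b',c',u'⟩
  simp only [pl23, pl12, E23]
  by_cases h : a = a' <;> by_cases h' : u = u' <;> simp [h, h']

theorem E24_eq (C : ι → κ → Matrix (ι × υ) (ι × υ) ℂ) :
    pl23 (fun a => pl13 (fun w => C a w)) = E24 C := by
  funext ⟨a,b,c,u⟩ ⟨a',b',c',u'⟩
  simp only [pl23, pl13, E24]
  by_cases h : a = a' <;> by_cases h' : c = c' <;> simp [h, h']

/-! ### Diagonal lifts along legs 3 and 4 -/

/-- diagonal-in-leg-4 lift of an operator family on legs 1,2,3. -/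
def lift4 (F : υ → Matrix (ι × ι × κ) (ι × ι × κ) ℂ) :
    Matrix (ι × ι × κ × υ) (ι × ι × κ × υ) ℂ :=
  fun p q => if p.2.2.2 = q.2.2.2 then
    F q.2.2.2 (p.1, p.2.1, p.2.2.1) (q.1, q.2.1, q.2.2.1) else 0

/-- diagonal-in-leg-3 lift of an operator family on legs 1,2,4. -/
def lift3 (F : κ → Matrix (ι × ι × υ) (ι × ι × υ) ℂ) :
    Matrix (ι × ι × κ × υ) (ι × ι × κ × υ) ℂ :=
  fun p q => if p.2.2.1 = q.2.2.1 then
    F q.2.2.1 (p.1, p.2.1, p.2.2.2) (q.1, q.2.1, q.2.2.2) else 0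

theorem lift4_mul (F G : υ → Matrix (ι × ι × κ) (ι × ι × κ) ℂ) :
    lift4 (fun u => F u * G u) = lift4 F * lift4 G := by
  funext ⟨a,b,c,u⟩ ⟨a',b',c',u'⟩
  simp only [lift4, Matrix.mul_apply, Fintype.sum_prod_type, ite_mul, mul_ite, zero_mul, mul_zero]
  by_cases h : u = u'
  · subst h; simp
  · simp [h]

theorem lift3_mul (F G : κ → Matrix (ι × ι × υ) (ι × ι × υ) ℂ) :
    lift3 (fun w => F w * G w) = lift3 F * lift3 G := by
  funext ⟨a,b,c,u⟩ ⟨a',b',c',u'⟩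
  simp only [lift3, Matrix.mul_apply, Fintype.sum_prod_type, ite_mul, mul_ite, zero_mul, mul_zero]
  by_cases h : c = c'
  · subst h; simp [Finset.sum_comm (γ := υ)]
  · simp [h]

theorem pl12_lift4 (A : κ × υ → Matrix (ι × ι) (ι × ι) ℂ) :
    pl12 A = lift4 (fun u => pl12 (fun w => A (w, u))) := by
  funext ⟨a,b,c,u⟩ ⟨a',b',c',u'⟩
  simp only [lift4, pl12]
  by_cases h : u = u' <;> by_cases h' : c = c' <;> simp [h, h', Prod.ext_iff]

theorem E13_lift4 (C : ι → υ → Matrix (ι × κ) (ι × κ) ℂ) :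
    E13 C = lift4 (fun u => pl13 (fun b => C b u)) := by
  funext ⟨a,b,c,u⟩ ⟨a',b',c',u'⟩
  simp only [lift4, pl13, E13]
  by_cases h : u = u' <;> by_cases h' : b = b' <;> simp [h, h']

theorem E23_lift4 (C : ι → υ → Matrix (ι × κ) (ι × κ) ℂ) :
    E23 C = lift4 (fun u => pl23 (fun a => C a u)) := by
  funext ⟨a,b,c,u⟩ ⟨a',b',c',u'⟩
  simp only [lift4, pl23, E23]
  by_cases h : u = u' <;> by_cases h' : a = a' <;> simp [h, h']

theorem pl12_lift3 (A : κ × υ → Matrix (ι × ι) (ι × ι) ℂ) :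
    pl12 A = lift3 (fun w => pl12 (fun u => A (w, u))) := by
  funext ⟨a,b,c,u⟩ ⟨a',b',c',u'⟩
  simp only [lift3, pl12]
  by_cases h : u = u' <;> by_cases h' : c = c' <;> simp [h, h', Prod.ext_iff]

theorem E14_lift3 (C : ι → κ → Matrix (ι × υ) (ι × υ) ℂ) :
    E14 C = lift3 (fun w => pl13 (fun b => C b w)) := by
  funext ⟨a,b,c,u⟩ ⟨a',b',c',u'⟩
  simp only [lift3, pl13, E14]
  by_cases h : c = c' <;> by_cases h' : b = b' <;> simp [h, h']

theorem E24_lift3 (C : ι → κ → Matrix (ι × υ) (ι × υ) ℂ) :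
    E24 C = lift3 (fun w => pl23 (fun a => C a w)) := by
  funext ⟨a,b,c,u⟩ ⟨a',b',c',u'⟩
  simp only [lift3, pl23, E24]
  by_cases h : c = c' <;> by_cases h' : a = a' <;> simp [h, h']

/-! ### Commutation of operators on disjoint legs with conserved dynamical shift -/

theorem comm_E14_E23 (wtV : ι → H d) (wtU : υ → H d)
    (M : Matrix (ι × υ) (ι × υ) ℂ)
    (hM : ∀ p q, wtV p.1 + wtU p.2 ≠ wtV q.1 + wtU q.2 → M p q = 0)
    (C : ι → υ → Matrix (ι × κ) (ι × κ) ℂ)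
    (hC : ∀ a u a' u', wtV a + wtU u = wtV a' + wtU u' → C a u = C a' u') :
    E14 (fun _ _ => M) * E23 C = E23 C * E14 (fun _ _ => M) := by
  funext ⟨a,b,w,u⟩ ⟨a',b',w',u'⟩
  simp only [E14, E23, Matrix.mul_apply, Fintype.sum_prod_type, ite_and, ite_mul, mul_ite,
    zero_mul, mul_zero]
  simp
  by_cases hm : M (a, u) (a', u') = 0
  · simp [hm]
  · have hw : wtV a + wtU u = wtV a' + wtU u' := by
      by_contra hne; exact hm (hM _ _ hne)
    rw [hC a u a' u' hw, mul_comm]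

theorem comm_E13_E24 (wtV : ι → H d) (wtU : υ → H d)
    (M : Matrix (ι × υ) (ι × υ) ℂ)
    (hM : ∀ p q, wtV p.1 + wtU p.2 ≠ wtV q.1 + wtU q.2 → M p q = 0)
    (C : ι → υ → Matrix (ι × κ) (ι × κ) ℂ)
    (hC : ∀ b u b' u', wtV b + wtU u = wtV b' + wtU u' → C b u = C b' u') :
    E13 C * E24 (fun _ _ => M) = E24 (fun _ _ => M) * E13 C := by
  funext ⟨a,b,w,u⟩ ⟨a',b',w',u'⟩
  simp only [E13, E24, Matrix.mul_apply, Fintype.sum_prod_type, ite_and, ite_mul, mul_ite,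
    zero_mul, mul_zero]
  simp
  by_cases hm : M (b, u) (b', u') = 0
  · simp [hm]
  · have hw : wtV b + wtU u = wtV b' + wtU u' := by
      by_contra hne; exact hm (hM _ _ hne)
    rw [hC b u b' u' hw, mul_comm]

theorem assemble {Mo : Type*} [Monoid Mo] (A1 B1 B2 C1 C2 C1' C2' B1' B2' A2 A3 : Mo)
    (h1 : B2 * C1 = C1 * B2)
    (h2 : A1 * B1 * C1 = C1' * B1' * A2)
    (h3 : A2 * B2 * C2 = C2' * B2' * A3)
    (h4 : B1' * C2' = C2' * B1') :
    A1 * (B1 * B2) * (C1 * C2) = C1' * C2' * (B1' * B2') * A3 := by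
  simp only [← mul_assoc]
  rw [mul_assoc (A1 * B1) B2 C1, h1, ← mul_assoc, h2]
  rw [show C1' * B1' * A2 * B2 * C2 = C1' * B1' * (A2 * B2 * C2) by simp only [mul_assoc]]
  rw [h3]
  simp only [← mul_assoc]
  rw [mul_assoc C1' B1' C2', h4, ← mul_assoc]

end Aux

/-- Tensor product of representations of a dynamical R-matrix is a
representation. -/
theorem tensor_product_of_representations
    (γ : ℂ) (wtV : ι → H d) (wtW : κ → H d) (wtU : υ → H d)
    (R : H d → Matrix (ι × ι) (ι × ι) ℂ)
    (LW : H d → Matrix (ι × κ) (ι × κ) ℂ) (LU : H d → Matrix (ι × υ) (ι × υ) ℂ)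
    (hRqdybe : RepRel γ wtV wtV R R)
    (hRwt : ZeroWeight wtV wtV R) (hRinv : ∀ lam, IsUnit (R lam))
    (hW : RepRel γ wtV wtW R LW) (hWwt : ZeroWeight wtV wtW LW)
    (hWinv : ∀ lam, IsUnit (LW lam))
    (hU : RepRel γ wtV wtU R LU) (hUwt : ZeroWeight wtV wtU LU)
    (hUinv : ∀ lam, IsUnit (LU lam)) :
    RepRel γ wtV (fun cu : κ × υ => wtW cu.1 + wtU cu.2) R (Ltens γ wtU LW LU) := by
  intro lam
  beta_reduce
  -- decompose the tensor-product L-operators into four-leg placements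
  have dA : pl13 (fun _ : ι => Ltens γ wtU LW LU lam)
      = E13 (fun (_ : ι) u => LW (lam - γ • wtU u)) * E14 (fun (_ : ι) (_ : κ) => LU lam) := by
    rw [show (fun _ : ι => Ltens γ wtU LW LU lam)
        = (fun _ : ι => pl12 (fun u => LW (lam - γ • wtU u)) * pl13 (fun _ : κ => LU lam))
        from rfl, pl13_mul, E13_eq, E14_eq]
  have dB : pl13 (fun b : ι => Ltens γ wtU LW LU (lam - γ • wtV b))
      = E13 (fun b u => LW (lam - γ • wtV b - γ • wtU u)) *
        E14 (fun b (_ : κ) => LU (lam - γ • wtV b)) := by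
    rw [show (fun b : ι => Ltens γ wtU LW LU (lam - γ • wtV b))
        = (fun b : ι => pl12 (fun u => LW (lam - γ • wtV b - γ • wtU u)) *
            pl13 (fun _ : κ => LU (lam - γ • wtV b)))
        from rfl, pl13_mul, E13_eq, E14_eq]
  have dC : pl23 (fun a : ι => Ltens γ wtU LW LU (lam - γ • wtV a))
      = E23 (fun a u => LW (lam - γ • wtV a - γ • wtU u)) *
        E24 (fun a (_ : κ) => LU (lam - γ • wtV a)) := by
    rw [show (fun a : ι => Ltens γ wtU LW LU (lam - γ • wtV a))
        = (fun a : ι => pl12 (fun u => LW (lam - γ • wtV a - γ • wtU u)) *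
            pl13 (fun _ : κ => LU (lam - γ • wtV a)))
        from rfl, pl23_mul, E23_eq, E24_eq]
  have dD : pl23 (fun _ : ι => Ltens γ wtU LW LU lam)
      = E23 (fun (_ : ι) u => LW (lam - γ • wtU u)) * E24 (fun (_ : ι) (_ : κ) => LU lam) := by
    rw [show (fun _ : ι => Ltens γ wtU LW LU lam)
        = (fun _ : ι => pl12 (fun u => LW (lam - γ • wtU u)) * pl13 (fun _ : κ => LU lam))
        from rfl, pl23_mul, E23_eq, E24_eq]
  -- reorder the dynamical shifts
  have cR : pl12 (fun c : κ × υ => R (lam - γ • (wtW c.1 + wtU c.2)))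
      = pl12 (fun c : κ × υ => R (lam - γ • wtU c.2 - γ • wtW c.1)) :=
    congrArg pl12 (funext fun c => congrArg R
      (by rw [smul_add, sub_add_eq_sub_sub, sub_right_comm]))
  have cC : E23 (fun a u => LW (lam - γ • wtV a - γ • wtU u))
      = E23 (fun a u => LW (lam - γ • wtU u - γ • wtV a)) :=
    congrArg E23 (funext fun a => funext fun u => congrArg LW (sub_right_comm _ _ _))
  have cB : E13 (fun b u => LW (lam - γ • wtV b - γ • wtU u))
      = E13 (fun b u => LW (lam - γ • wtU u - γ • wtV b)) :=
    congrArg E13 (funext fun b => funext fun u => congrArg LW (sub_right_comm _ _ _))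
  -- the two disjoint-legs commutations
  have step1 : E14 (fun (_ : ι) (_ : κ) => LU lam) *
        E23 (fun a u => LW (lam - γ • wtU u - γ • wtV a))
      = E23 (fun a u => LW (lam - γ • wtU u - γ • wtV a)) *
        E14 (fun (_ : ι) (_ : κ) => LU lam) :=
    comm_E14_E23 wtV wtU (LU lam) (hUwt lam) _ (fun a u a' u' h => congrArg LW
      (by rw [sub_sub, sub_sub, add_comm (γ • wtU u), add_comm (γ • wtU u'),
        ← smul_add, ← smul_add, h]))
  have step4 : E13 (fun b u => LW (lam - γ • wtU u - γ • wtV b)) *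
        E24 (fun (_ : ι) (_ : κ) => LU lam)
      = E24 (fun (_ : ι) (_ : κ) => LU lam) *
        E13 (fun b u => LW (lam - γ • wtU u - γ • wtV b)) :=
    comm_E13_E24 wtV wtU (LU lam) (hUwt lam) _ (fun b u b' u' h => congrArg LW
      (by rw [sub_sub, sub_sub, add_comm (γ • wtU u), add_comm (γ • wtU u'),
        ← smul_add, ← smul_add, h]))
  -- the lifted RLL-relation for W (diagonal in leg 4)
  have hWkey : pl12 (fun c : κ × υ => R (lam - γ • wtU c.2 - γ • wtW c.1)) *
        E13 (fun (_ : ι) u => LW (lam - γ • wtU u)) *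
        E23 (fun a u => LW (lam - γ • wtU u - γ • wtV a)) =
      E23 (fun (_ : ι) u => LW (lam - γ • wtU u)) *
        E13 (fun b u => LW (lam - γ • wtU u - γ • wtV b)) *
        pl12 (fun c : κ × υ => R (lam - γ • wtU c.2)) := by
    rw [pl12_lift4 (fun c : κ × υ => R (lam - γ • wtU c.2 - γ • wtW c.1)),
      pl12_lift4 (fun c : κ × υ => R (lam - γ • wtU c.2)),
      E13_lift4, E13_lift4, E23_lift4, E23_lift4,
      ← lift4_mul, ← lift4_mul, ← lift4_mul, ← lift4_mul]
    exact congrArg lift4 (funext fun u => hW (lam - γ • wtU u))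
  -- the lifted RLL-relation for U (diagonal in leg 3)
  have hUkey : pl12 (fun c : κ × υ => R (lam - γ • wtU c.2)) *
        E14 (fun (_ : ι) (_ : κ) => LU lam) *
        E24 (fun a (_ : κ) => LU (lam - γ • wtV a)) =
      E24 (fun (_ : ι) (_ : κ) => LU lam) *
        E14 (fun b (_ : κ) => LU (lam - γ • wtV b)) *
        pl12 (fun _ : κ × υ => R lam) := by
    rw [pl12_lift3 (fun c : κ × υ => R (lam - γ • wtU c.2)),
      pl12_lift3 (fun _ : κ × υ => R lam),
      E14_lift3, E14_lift3, E24_lift3, E24_lift3,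
      ← lift3_mul, ← lift3_mul, ← lift3_mul, ← lift3_mul]
    exact congrArg lift3 (funext fun _ => hU lam)
  rw [cR, dA, dB, dC, dD, cC, cB]
  exact assemble _ _ _ _ _ _ _ _ _ _ _ step1 hWkey hUkey step4

end Stmt15
end

section
/- Let R be a quantum dynamical R-matrix with step γ on V⊗V, and let (W, L_W), (W', L_{W'}), (U, L_U) be representations of R. If f: 𝔥* → End_𝔥(W) and g: 𝔥* → End_𝔥(U) are morphisms, i.e. (1⊗f(λ))L_W(λ) = L_{W'}(λ)(1⊗f(λ−γh¹)) and similarly for g, then (f⊗g)(λ) := f(λ−γh²)⊗g(λ) is a morphism from (W⊗U, L_{W⊗U}) to (W'⊗U', L_{W'⊗U'}), where L_{W⊗U}(λ) = L_W¹²(λ−γh³)L_U¹³(λ). -/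
/-!
STATEMENT 16: the tensor product of morphisms in the category Rep(R) of
representations of a quantum dynamical R-matrix,
`(f ⊗ g)(λ) = f(λ - γh²) ⊗ g(λ)`, is again a morphism
`(W ⊗ U, L_{W⊗U}) → (W' ⊗ U', L_{W'⊗U'})`.

Encoding as usual: 𝔥* ≅ ℂᵈ, finite dimensional semisimple 𝔥-modules with
weight bases (V ~ ι, W ~ κ, W' ~ κ', U ~ υ, U' ~ υ'), operators as matrices.
-/

namespace Stmt16

abbrev H (d : ℕ) := Fin d → ℂ

def pl12 {α β γ' : Type*} [DecidableEq γ']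
    (A : γ' → Matrix (α × β) (α × β) ℂ) : Matrix (α × β × γ') (α × β × γ') ℂ :=
  fun p q => if p.2.2 = q.2.2 then A q.2.2 (p.1, p.2.1) (q.1, q.2.1) else 0

def pl13 {α β γ' : Type*} [DecidableEq β]
    (A : β → Matrix (α × γ') (α × γ') ℂ) : Matrix (α × β × γ') (α × β × γ') ℂ :=
  fun p q => if p.2.1 = q.2.1 then A q.2.1 (p.1, p.2.2) (q.1, q.2.2) else 0

def pl23 {α β γ' : Type*} [DecidableEq α]
    (A : α → Matrix (β × γ') (β × γ') ℂ) : Matrix (α × β × γ') (α × β × γ') ℂ :=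
  fun p q => if p.1 = q.1 then A q.1 (p.2.1, p.2.2) (q.2.1, q.2.2) else 0

/-- `1 ⊗ f`, where `f` may depend on the (spectator) index of the first leg. -/
def lf {α β β' : Type*} [DecidableEq α]
    (f : α → Matrix β' β ℂ) : Matrix (α × β') (α × β) ℂ :=
  fun p q => if p.1 = q.1 then f q.1 p.2 q.2 else 0

variable {d : ℕ} {ι κ κ' υ υ' : Type*}
  [Fintype ι] [DecidableEq ι] [Fintype κ] [DecidableEq κ] [Fintype κ'] [DecidableEq κ']
  [Fintype υ] [DecidableEq υ] [Fintype υ'] [DecidableEq υ']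

def RepRel (γ : ℂ) (wtV : ι → H d) (wtW : κ → H d)
    (R : H d → Matrix (ι × ι) (ι × ι) ℂ) (L : H d → Matrix (ι × κ) (ι × κ) ℂ) : Prop :=
  ∀ lam : H d,
    pl12 (fun c => R (lam - γ • wtW c)) * pl13 (fun _ => L lam) *
        pl23 (fun a => L (lam - γ • wtV a)) =
      pl23 (fun _ => L lam) * pl13 (fun b => L (lam - γ • wtV b)) *
        pl12 (fun _ => R lam)

def ZeroWeight {κ₁ : Type*} (wtV : ι → H d) (wtW : κ₁ → H d)
    (L : H d → Matrix (ι × κ₁) (ι × κ₁) ℂ) : Prop :=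
  ∀ lam p q, wtV p.1 + wtW p.2 ≠ wtV q.1 + wtW q.2 → L lam p q = 0

/-- `f : (W, L) → (W', L')` is a morphism in Rep(R):
`(1 ⊗ f(λ)) L(λ) = L'(λ) (1 ⊗ f(λ - γh¹))`. -/
def IsMor {κ₁ κ₂ : Type*} [Fintype κ₁] [DecidableEq κ₁] [Fintype κ₂]
    (γ : ℂ) (wtV : ι → H d)
    (L : H d → Matrix (ι × κ₁) (ι × κ₁) ℂ) (L' : H d → Matrix (ι × κ₂) (ι × κ₂) ℂ)
    (f : H d → Matrix κ₂ κ₁ ℂ) : Prop :=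
  ∀ lam : H d,
    lf (fun _ : ι => f lam) * L lam = L' lam * lf (fun a => f (lam - γ • wtV a))

/-- `f` is weight preserving (a map of 𝔥-modules). -/
def WtPres {κ₁ κ₂ : Type*} (wtW : κ₁ → H d) (wtW' : κ₂ → H d)
    (f : H d → Matrix κ₂ κ₁ ℂ) : Prop :=
  ∀ lam p q, wtW' p ≠ wtW q → f lam p q = 0

/-- Tensor product representation `L_{W⊗U}(λ) = L_W¹²(λ-γh³) L_U¹³(λ)`. -/
noncomputable def Ltens {κ₁ υ₁ : Type*} [Fintype ι] [DecidableEq ι]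
    [Fintype κ₁] [DecidableEq κ₁] [Fintype υ₁] [DecidableEq υ₁]
    (γ : ℂ) (wtU : υ₁ → H d)
    (LW : H d → Matrix (ι × κ₁) (ι × κ₁) ℂ) (LU : H d → Matrix (ι × υ₁) (ι × υ₁) ℂ)
    (lam : H d) : Matrix (ι × κ₁ × υ₁) (ι × κ₁ × υ₁) ℂ :=
  pl12 (fun u => LW (lam - γ • wtU u)) * pl13 (fun _ : κ₁ => LU lam)

/-- Tensor product of morphisms `(f ⊗ g)(λ) = f(λ - γh²) ⊗ g(λ)`. -/
noncomputable def morTens (γ : ℂ) (wtU : υ → H d)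
    (f : H d → Matrix κ' κ ℂ) (g : H d → Matrix υ' υ ℂ)
    (lam : H d) : Matrix (κ' × υ') (κ × υ) ℂ :=
  fun p q => f (lam - γ • wtU q.2) p.1 q.1 * g lam p.2 q.2


/-! ### Auxiliary machinery for the proof -/

section Aux

set_option linter.dupNamespace false in
/-- An operator acting on leg 2 of a triple tensor product, with coefficients
possibly depending on the (spectator) indices of legs 1 and 3. -/
def F2 {α β₁ β₂ γ'' : Type*} [DecidableEq α] [DecidableEq γ'']
    (f : α → γ'' → Matrix β₂ β₁ ℂ) : Matrix (α × β₂ × γ'') (α × β₁ × γ'') ℂ :=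
  fun p q => if p.1 = q.1 ∧ p.2.2 = q.2.2 then f q.1 q.2.2 p.2.1 q.2.1 else 0

set_option linter.dupNamespace false in
/-- An operator acting on leg 3 of a triple tensor product, with coefficients
possibly depending on the (spectator) indices of legs 1 and 2. -/
def F3 {α β γ₁ γ₂ : Type*} [DecidableEq α] [DecidableEq β]
    (g : α → β → Matrix γ₂ γ₁ ℂ) : Matrix (α × β × γ₂) (α × β × γ₁) ℂ :=
  fun p q => if p.1 = q.1 ∧ p.2.1 = q.2.1 then g q.1 q.2.1 p.2.2 q.2.2 else 0

lemma mul_apply_single {n m o : Type*} [Fintype m] [DecidableEq m]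
    (M : Matrix n m ℂ) (N : Matrix m o ℂ) (p : n) (q : o) (j : m)
    (h : ∀ k, k ≠ j → M p k * N k q = 0) : (M * N) p q = M p j * N j q := by
  rw [Matrix.mul_apply]
  exact Finset.sum_eq_single j (fun k _ hk => h k hk) (by simp)

variable {d : ℕ} {ι κ κ' υ υ' : Type*}
  [Fintype ι] [DecidableEq ι] [Fintype κ] [DecidableEq κ] [Fintype κ'] [DecidableEq κ']
  [Fintype υ] [DecidableEq υ] [Fintype υ'] [DecidableEq υ']

/-- Step 0: `1 ⊗ (f ⊗ g)(λ)` factors as (g on leg 3) ∘ (f on leg 2). -/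
lemma step0 (γ : ℂ) (wtU : υ → H d)
    (f : H d → Matrix κ' κ ℂ) (g : H d → Matrix υ' υ ℂ) (lam : H d) :
    lf (fun _ : ι => morTens γ wtU f g lam)
    = F3 (fun (_ : ι) (_ : κ') => g lam) * F2 (fun (_ : ι) z => f (lam - γ • wtU z)) := by
  ext ⟨a, p, x⟩ ⟨b, q, y⟩
  simp [lf, morTens, F2, F3, Matrix.mul_apply, Fintype.sum_prod_type, ite_and, mul_ite, ite_mul,
    Finset.sum_ite_eq, Finset.sum_ite_eq', mul_comm]

/-- Step 1: push `f` (leg 2) through `L_W¹²(λ - γh³)`, using that `f` is a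
morphism. -/
lemma step1 (γ : ℂ) (wtV : ι → H d) (wtU : υ → H d)
    (LW : H d → Matrix (ι × κ) (ι × κ) ℂ) (LW' : H d → Matrix (ι × κ') (ι × κ') ℂ)
    (f : H d → Matrix κ' κ ℂ) (hf : IsMor γ wtV LW LW' f) (lam : H d) :
    F2 (fun (_ : ι) (z : υ) => f (lam - γ • wtU z)) * pl12 (fun u => LW (lam - γ • wtU u))
    = pl12 (fun u => LW' (lam - γ • wtU u)) *
      F2 (fun (a : ι) (z : υ) => f (lam - γ • wtU z - γ • wtV a)) := by
  ext ⟨a, p, x⟩ ⟨b, q, y⟩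
  have h := congrFun (congrFun (hf (lam - γ • wtU y)) (a, p)) (b, q)
  simp only [lf, Matrix.mul_apply, Fintype.sum_prod_type] at h
  simp only [lf, F2, pl12, Matrix.mul_apply, Fintype.sum_prod_type, ite_and, mul_ite, ite_mul,
    mul_zero, zero_mul, Finset.sum_ite_eq, Finset.sum_ite_eq', Finset.mem_univ, if_true] at h ⊢
  by_cases hxy : x = y
  · subst hxy; simpa using h
  · simp [hxy, Ne.symm hxy]

/-- Step 2: `g` on leg 3 commutes with `L_{W'}¹²(λ - γh³)`, trading the shift
by `wtU` for the shift by `wtU'` (since `g` is weight preserving). -/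
lemma step2 (γ : ℂ) (wtU : υ → H d) (wtU' : υ' → H d)
    (LW' : H d → Matrix (ι × κ') (ι × κ') ℂ)
    (g : H d → Matrix υ' υ ℂ) (hgwt : WtPres wtU wtU' g) (lam : H d) :
    F3 (fun (_ : ι) (_ : κ') => g lam) * pl12 (fun u : υ => LW' (lam - γ • wtU u))
    = pl12 (fun u : υ' => LW' (lam - γ • wtU' u)) * F3 (fun (_ : ι) (_ : κ') => g lam) := by
  ext ⟨a, p, x⟩ ⟨b, q, y⟩
  rw [mul_apply_single _ _ _ _ (a, p, y) (by
    rintro ⟨c, r, z⟩ hk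
    by_cases h1 : a = c <;> by_cases h2 : p = r <;> by_cases h3 : z = y <;>
      simp_all [F3, pl12, Prod.ext_iff])]
  rw [mul_apply_single _ _ _ _ (b, q, x) (by
    rintro ⟨c, r, z⟩ hk
    by_cases h1 : c = b <;> by_cases h2 : r = q <;> by_cases h3 : x = z <;>
      simp_all [F3, pl12, Prod.ext_iff])]
  simp only [F3, pl12, and_self, if_true, if_pos rfl]
  by_cases hw : wtU' x = wtU y
  · simp [hw]; ring
  · simp [hgwt lam x y hw]

/-- Step 3: `f` on leg 2 (with weight-dependent argument) commutes with
`L_U¹³(λ)`, since `L_U` has zero weight. -/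
lemma step3 (γ : ℂ) (wtV : ι → H d) (wtU : υ → H d)
    (LU : H d → Matrix (ι × υ) (ι × υ) ℂ) (hUwt : ZeroWeight wtV wtU LU)
    (f : H d → Matrix κ' κ ℂ) (lam : H d) :
    F2 (fun (a : ι) (z : υ) => f (lam - γ • wtU z - γ • wtV a)) * pl13 (fun _ : κ => LU lam)
    = pl13 (fun _ : κ' => LU lam) *
      F2 (fun (a : ι) (z : υ) => f (lam - γ • wtU z - γ • wtV a)) := by
  ext ⟨a, p, x⟩ ⟨b, q, y⟩
  rw [mul_apply_single _ _ _ _ (a, q, x) (by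
    rintro ⟨c, r, z⟩ hk
    by_cases h1 : a = c <;> by_cases h2 : x = z <;> by_cases h3 : r = q <;>
      simp_all [F2, pl13, Prod.ext_iff])]
  rw [mul_apply_single _ _ _ _ (b, p, y) (by
    rintro ⟨c, r, z⟩ hk
    by_cases h1 : c = b <;> by_cases h2 : z = y <;> by_cases h3 : p = r <;>
      simp_all [F2, pl13, Prod.ext_iff])]
  simp only [F2, pl13, and_self, if_true, if_pos rfl]
  by_cases hw : wtV a + wtU x = wtV b + wtU y
  · have harg : lam - γ • wtU x - γ • wtV a = lam - γ • wtU y - γ • wtV b := by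
      rw [sub_sub, sub_sub, ← smul_add, ← smul_add, add_comm (wtU x), add_comm (wtU y), hw]
    rw [harg]; ring
  · rw [hUwt lam (a, x) (b, y) hw]; ring

/-- Step 4: push `g` (leg 3) through `L_U¹³(λ)`, using that `g` is a
morphism; leg 2 is a spectator. -/
lemma step4 (γ : ℂ) (wtV : ι → H d)
    (LU : H d → Matrix (ι × υ) (ι × υ) ℂ) (LU' : H d → Matrix (ι × υ') (ι × υ') ℂ)
    (g : H d → Matrix υ' υ ℂ) (hg : IsMor γ wtV LU LU' g) (lam : H d) :
    F3 (fun (_ : ι) (_ : κ') => g lam) * pl13 (fun _ : κ' => LU lam)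
    = pl13 (fun _ : κ' => LU' lam) * F3 (fun (a : ι) (_ : κ') => g (lam - γ • wtV a)) := by
  ext ⟨a, p, x⟩ ⟨b, q, y⟩
  have h := congrFun (congrFun (hg lam) (a, x)) (b, y)
  simp only [lf, Matrix.mul_apply, Fintype.sum_prod_type] at h
  simp only [lf, F3, pl13, Matrix.mul_apply, Fintype.sum_prod_type, ite_and, mul_ite, ite_mul,
    mul_zero, zero_mul, Finset.sum_ite_eq, Finset.sum_ite_eq', Finset.mem_univ, if_true] at h ⊢
  by_cases hpq : p = q
  · subst hpq; simpa using h
  · simp [hpq, Ne.symm hpq]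

/-- Step 5: recombine the shifted `g` and `f` into `1 ⊗ (f ⊗ g)(λ - γh¹)`. -/
lemma step5 (γ : ℂ) (wtV : ι → H d) (wtU : υ → H d)
    (f : H d → Matrix κ' κ ℂ) (g : H d → Matrix υ' υ ℂ) (lam : H d) :
    F3 (fun (a : ι) (_ : κ') => g (lam - γ • wtV a)) *
      F2 (fun (a : ι) (z : υ) => f (lam - γ • wtU z - γ • wtV a))
    = lf (fun a => morTens γ wtU f g (lam - γ • wtV a)) := by
  ext ⟨a, p, x⟩ ⟨b, q, y⟩
  have harg : lam - γ • wtU y - γ • wtV b = lam - γ • wtV b - γ • wtU y :=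
    sub_right_comm _ _ _
  simp [lf, morTens, F2, F3, Matrix.mul_apply, Fintype.sum_prod_type, ite_and, mul_ite, ite_mul,
    Finset.sum_ite_eq, Finset.sum_ite_eq', mul_comm, harg]

end Aux

/-- Tensor product of morphisms is a morphism of the tensor product
representations. -/
theorem tensor_product_of_morphisms
    (γ : ℂ) (wtV : ι → H d) (wtW : κ → H d) (wtW' : κ' → H d)
    (wtU : υ → H d) (wtU' : υ' → H d)
    (R : H d → Matrix (ι × ι) (ι × ι) ℂ)
    (LW : H d → Matrix (ι × κ) (ι × κ) ℂ) (LW' : H d → Matrix (ι × κ') (ι × κ') ℂ)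
    (LU : H d → Matrix (ι × υ) (ι × υ) ℂ) (LU' : H d → Matrix (ι × υ') (ι × υ') ℂ)
    (f : H d → Matrix κ' κ ℂ) (g : H d → Matrix υ' υ ℂ)
    (hRqdybe : RepRel γ wtV wtV R R) (hRwt : ZeroWeight wtV wtV R)
    (hWrel : RepRel γ wtV wtW R LW) (hWwt : ZeroWeight wtV wtW LW)
    (hW'rel : RepRel γ wtV wtW' R LW') (hW'wt : ZeroWeight wtV wtW' LW')
    (hUrel : RepRel γ wtV wtU R LU) (hUwt : ZeroWeight wtV wtU LU)
    (hU'rel : RepRel γ wtV wtU' R LU') (hU'wt : ZeroWeight wtV wtU' LU')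
    (hf : IsMor γ wtV LW LW' f) (hfwt : WtPres wtW wtW' f)
    (hg : IsMor γ wtV LU LU' g) (hgwt : WtPres wtU wtU' g) :
    IsMor γ wtV (Ltens γ wtU LW LU) (Ltens γ wtU' LW' LU')
      (fun lam => morTens γ wtU f g lam) := by
  intro lam
  show lf (fun _ : ι => morTens γ wtU f g lam) * Ltens γ wtU LW LU lam
      = Ltens γ wtU' LW' LU' lam * lf (fun a => morTens γ wtU f g (lam - γ • wtV a))
  rw [Ltens, Ltens, step0 γ wtU f g lam]
  calc
    F3 (fun (_ : ι) (_ : κ') => g lam) * F2 (fun (_ : ι) (z : υ) => f (lam - γ • wtU z)) *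
        (pl12 (fun u : υ => LW (lam - γ • wtU u)) * pl13 (fun _ : κ => LU lam))
      = F3 (fun (_ : ι) (_ : κ') => g lam) *
          ((F2 (fun (_ : ι) (z : υ) => f (lam - γ • wtU z)) *
            pl12 (fun u : υ => LW (lam - γ • wtU u))) * pl13 (fun _ : κ => LU lam)) := by
        rw [Matrix.mul_assoc, ← Matrix.mul_assoc (F2 (fun (_ : ι) (z : υ) => f (lam - γ • wtU z)))]
    _ = F3 (fun (_ : ι) (_ : κ') => g lam) *
          ((pl12 (fun u : υ => LW' (lam - γ • wtU u)) *
            F2 (fun (a : ι) (z : υ) => f (lam - γ • wtU z - γ • wtV a))) *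
            pl13 (fun _ : κ => LU lam)) := by
        rw [step1 γ wtV wtU LW LW' f hf lam]
    _ = (F3 (fun (_ : ι) (_ : κ') => g lam) * pl12 (fun u : υ => LW' (lam - γ • wtU u))) *
          (F2 (fun (a : ι) (z : υ) => f (lam - γ • wtU z - γ • wtV a)) *
            pl13 (fun _ : κ => LU lam)) := by
        rw [Matrix.mul_assoc (pl12 (fun u : υ => LW' (lam - γ • wtU u))),
          ← Matrix.mul_assoc (F3 (fun (_ : ι) (_ : κ') => g lam))]
    _ = (pl12 (fun u : υ' => LW' (lam - γ • wtU' u)) * F3 (fun (_ : ι) (_ : κ') => g lam)) *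
          (pl13 (fun _ : κ' => LU lam) *
            F2 (fun (a : ι) (z : υ) => f (lam - γ • wtU z - γ • wtV a))) := by
        rw [step2 γ wtU wtU' LW' g hgwt lam, step3 γ wtV wtU LU hUwt f lam]
    _ = pl12 (fun u : υ' => LW' (lam - γ • wtU' u)) *
          ((F3 (fun (_ : ι) (_ : κ') => g lam) * pl13 (fun _ : κ' => LU lam)) *
            F2 (fun (a : ι) (z : υ) => f (lam - γ • wtU z - γ • wtV a))) := by
        rw [Matrix.mul_assoc (pl12 (fun u : υ' => LW' (lam - γ • wtU' u))),
          ← Matrix.mul_assoc (F3 (fun (_ : ι) (_ : κ') => g lam))]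
    _ = pl12 (fun u : υ' => LW' (lam - γ • wtU' u)) *
          ((pl13 (fun _ : κ' => LU' lam) * F3 (fun (a : ι) (_ : κ') => g (lam - γ • wtV a))) *
            F2 (fun (a : ι) (z : υ) => f (lam - γ • wtU z - γ • wtV a))) := by
        rw [step4 γ wtV LU LU' g hg lam]
    _ = (pl12 (fun u : υ' => LW' (lam - γ • wtU' u)) * pl13 (fun _ : κ' => LU' lam)) *
          (F3 (fun (a : ι) (_ : κ') => g (lam - γ • wtV a)) *
            F2 (fun (a : ι) (z : υ) => f (lam - γ • wtU z - γ • wtV a))) := by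
        rw [Matrix.mul_assoc (pl13 (fun _ : κ' => LU' lam)),
          ← Matrix.mul_assoc (pl12 (fun u : υ' => LW' (lam - γ • wtU' u)))]
    _ = (pl12 (fun u : υ' => LW' (lam - γ • wtU' u)) * pl13 (fun _ : κ' => LU' lam)) *
          lf (fun a => morTens γ wtU f g (lam - γ • wtV a)) := by
        rw [step5 γ wtV wtU f g lam]

end Stmt16
end

section
/- For q ∈ ℂ*, not a root of unity, let 𝔤 = 𝔰𝔩₂ and define on W⊗V (W, V weight modules for U_q(𝔰𝔩₂)) the ABRR-type recursion: J = Σ_{n≥0} J_n with J_0 = 1, where J_n has 𝔥-weight zero and its second component has weight 2n (degree n in the principal gradation), determined by J(λ)(1⊗q^{2Θ(λ)}) = ℛ₀²¹ (1⊗q^{2Θ(λ)}) J(λ). Then this recursion determines each J_n uniquely: i.e., if J and J' are two lower-triangular (J = 1 + strictly positive weight in second component) zero-weight solutions, then J = J'. -/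
/-!
STATEMENT 19: uniqueness of the lower-triangular solution of the ABRR
equation `J(λ)(1 ⊗ q^{2Θ(λ)}) = ℛ₀²¹ (1 ⊗ q^{2Θ(λ)}) J(λ)` for 𝔰𝔩₂
(q not a root of unity, λ generic): any two zero-weight solutions of the form
`J = 1 + (strictly positive weight in the second component)` coincide.

Encoding: W, V are finite dimensional weight modules with weight bases indexed
by κ, ι and integral weights `wtW, wtV`; `1 ⊗ q^{2Θ(λ)}` is the diagonal
matrix with entries `Q (wtV _)` where `Q m = q^{2θ_m(λ)}`; genericity of λ is
the hypothesis that `Q` separates the (finitely many) weights of V; `ℛ₀²¹` is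
any operator of the form `1 + (strictly raising on the V-component)`.
-/

namespace Stmt19

variable {κ ι : Type*} [Fintype κ] [DecidableEq κ] [Fintype ι] [DecidableEq ι]

/-- `X = 1 + N` where `N` is of zero total weight and strictly positive weight
in the second component: outside the strictly-raising region `X` equals the
identity. -/
def LowerTriangularUnipotent (wtW : κ → ℤ) (wtV : ι → ℤ)
    (X : Matrix (κ × ι) (κ × ι) ℂ) : Prop :=
  (∀ p q, wtV p.2 ≤ wtV q.2 → X p q = if p = q then 1 else 0) ∧
  (∀ p q, wtW p.1 + wtV p.2 ≠ wtW q.1 + wtV q.2 → X p q = 0)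

/-- The diagonal operator `1 ⊗ q^{2Θ(λ)}` (with `Q m = q^{2θ_m(λ)}`). -/
def Dq (wtV : ι → ℤ) (Q : ℤ → ℂ) : Matrix (κ × ι) (κ × ι) ℂ :=
  fun p q => if p = q then Q (wtV p.2) else 0

/-- The ABRR equation `X (1 ⊗ q^{2Θ}) = ℛ₀²¹ (1 ⊗ q^{2Θ}) X` determines its
lower-triangular unipotent zero-weight solution uniquely. -/
theorem ABRR_solution_unique
    (wtW : κ → ℤ) (wtV : ι → ℤ) (Q : ℤ → ℂ)
    (q : ℂ) (hq0 : q ≠ 0) (hqroot : ∀ n : ℕ, 0 < n → q ^ n ≠ 1)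
    (hgen : ∀ p q' : ι, wtV p ≠ wtV q' → Q (wtV p) ≠ Q (wtV q'))
    (M : Matrix (κ × ι) (κ × ι) ℂ)
    (hM : ∀ p q', wtV p.2 ≤ wtV q'.2 → M p q' = if p = q' then 1 else 0)
    (X X' : Matrix (κ × ι) (κ × ι) ℂ)
    (hX : LowerTriangularUnipotent wtW wtV X)
    (hX' : LowerTriangularUnipotent wtW wtV X')
    (hXeq : X * Dq wtV Q = M * (Dq wtV Q * X))
    (hX'eq : X' * Dq wtV Q = M * (Dq wtV Q * X')) :
    X = X' := by
  set D := X - X' with hD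
  have hDeq : D * Dq wtV Q = M * (Dq wtV Q * D) := by
    rw [hD, Matrix.sub_mul, Matrix.mul_sub, Matrix.mul_sub, hXeq, hX'eq]
  have key : ∀ n : ℕ, ∀ p q' : κ × ι,
      (Finset.univ.filter fun i : ι => wtV i < wtV p.2).card < n →
      D p q' = 0 := by
    intro n
    induction n with
    | zero => intro p q' h; omega
    | succ n ih =>
      intro p q' hcard
      by_cases hle : wtV p.2 ≤ wtV q'.2
      · simp [hD, Matrix.sub_apply, hX.1 p q' hle, hX'.1 p q' hle]
      · have hmain := congrFun (congrFun hDeq p) q'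
        simp only [Matrix.mul_apply] at hmain
        have hL : ∑ j : κ × ι, D p j * Dq wtV Q j q' = D p q' * Q (wtV q'.2) := by
          rw [Finset.sum_eq_single q']
          · simp [Dq]
          · intro b _ hb; simp [Dq, hb]
          · simp
        have hR : ∑ j : κ × ι, M p j * ∑ k : κ × ι, Dq wtV Q j k * D k q'
            = Q (wtV p.2) * D p q' := by
          have hterm : ∀ r : κ × ι, M p r * ∑ k : κ × ι, Dq wtV Q r k * D k q'
              = if r = p then Q (wtV p.2) * D p q' else 0 := by
            intro r
            have hDqD : ∑ k : κ × ι, Dq wtV Q r k * D k q' = Q (wtV r.2) * D r q' := by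
              rw [Finset.sum_eq_single r]
              · simp [Dq]
              · intro b _ hb; simp [Dq, Ne.symm hb]
              · simp
            rw [hDqD]
            by_cases hr : wtV p.2 ≤ wtV r.2
            · rw [hM p r hr]
              by_cases hpr : r = p
              · subst hpr; simp
              · simp [hpr, Ne.symm hpr]
            · have hlt : wtV r.2 < wtV p.2 := lt_of_not_ge hr
              have hrp : r ≠ p := by
                intro h; rw [h] at hlt; exact lt_irrefl _ hlt
              have hDr : D r q' = 0 := by
                apply ih
                have hss : (Finset.univ.filter fun i : ι => wtV i < wtV r.2) ⊂
                    (Finset.univ.filter fun i : ι => wtV i < wtV p.2) := by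
                  constructor
                  · intro i hi
                    simp only [Finset.mem_filter, Finset.mem_univ, true_and] at hi ⊢
                    exact hi.trans hlt
                  · intro hsub
                    have : r.2 ∈ (Finset.univ.filter fun i : ι => wtV i < wtV p.2) := by
                      simp [hlt]
                    have := hsub this
                    simp at this
                have := Finset.card_lt_card hss
                omega
              simp [hDr, hrp]
          rw [Finset.sum_congr rfl (fun r _ => hterm r)]
          simp
        rw [hL, hR] at hmain
        have hne : Q (wtV q'.2) ≠ Q (wtV p.2) := by
          apply hgen
          intro h
          exact hle (le_of_eq h.symm)
        have : D p q' * (Q (wtV q'.2) - Q (wtV p.2)) = 0 := by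
          rw [mul_sub, hmain]; ring
        rcases mul_eq_zero.mp this with h | h
        · exact h
        · exact absurd (sub_eq_zero.mp h) hne
  have hD0 : D = 0 := by
    ext p q'
    exact key ((Finset.univ.filter fun i : ι => wtV i < wtV p.2).card + 1) p q'
      (Nat.lt_succ_self _)
  have := sub_eq_zero.mp (hD ▸ hD0 : X - X' = 0)
  exact this

end Stmt19
end
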